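/- arXiv:2303.05899 — 11 statements merged into one kernel-verified Lean document; each statement's English description precedes it below -/
import Mathlib

section
/- If α is a rational multiple of π and cos α is rational, then cos α ∈ {-1, -1/2, 0, 1/2, 1}. -/
namespace Niven

theorem niven (α : ℝ) (hα : ∃ m n : ℤ, n ≠ 0 ∧ α = (m / n : ℝ) * Real.pi)
    (hcos : ∃ q : ℚ, (q : ℝ) = Real.cos α) :
    Real.cos α ∈ ({-1, -1/2, 0, 1/2, 1} : Set ℝ) := by
  obtain ⟨m, n, -, rfl⟩ := hα
  obtain ⟨q, hq⟩ := hcos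
  exact _root_.niven ⟨m / n, by push_cast; rfl⟩ ⟨q, hq.symm⟩
end Niven
end

section
/- If cos α = u/2^p where u is an odd integer and p ≥ 2, then for every natural number n ≥ 1, cos(nα) = a_n/2^(b_n) where a_n is an odd integer and b₁ < b₂ < ⋯ < b_n are positive integers; in particular cos(nα) is never an integer. -/
def aSeq (u : ℤ) (q : ℕ) : ℕ → ℤ
  | 0 => 1
  | 1 => u
  | 2 => u * u - 2 ^ (2*q+3)
  | (n+3) => u * aSeq u q (n+2) - 2 ^ (2*q+2) * aSeq u q (n+1)

def bSeq (q : ℕ) (n : ℕ) : ℕ := if n = 0 then 0 else n * (q+1) + 1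

lemma cos_rec (α : ℝ) (n : ℕ) :
    Real.cos (((n+2 : ℕ) : ℝ) * α)
      = 2 * Real.cos α * Real.cos (((n+1 : ℕ) : ℝ) * α) - Real.cos ((n : ℝ) * α) := by
  have h1 : ((n+2:ℕ):ℝ) * α = ((n+1:ℕ):ℝ) * α + α := by push_cast; ring
  have h2 : ((n:ℕ):ℝ) * α = ((n+1:ℕ):ℝ) * α - α := by push_cast; ring
  rw [h1, h2, Real.cos_add, Real.cos_sub]; ring

lemma aSeq_odd (u : ℤ) (q : ℕ) (hu : Odd u) : ∀ n, Odd (aSeq u q n) := by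
  intro n
  induction n using Nat.strong_induction_on with
  | _ n ih =>
    match n with
    | 0 => exact odd_one
    | 1 => exact hu
    | 2 =>
      show Odd (u * u - 2 ^ (2*q+3))
      exact (hu.mul hu).sub_even (even_two.pow_of_ne_zero (by omega))
    | (n+3) =>
      show Odd (u * aSeq u q (n+2) - 2 ^ (2*q+2) * aSeq u q (n+1))
      exact (hu.mul (ih (n+2) (by omega))).sub_even
        ((even_two.pow_of_ne_zero (by omega)).mul_right _)

lemma aSeq_cos (α : ℝ) (u : ℤ) (q : ℕ)
    (hcos : Real.cos α = (u : ℝ) / 2 ^ (q+2)) :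
    ∀ n : ℕ, Real.cos ((n : ℝ) * α) = (aSeq u q n : ℝ) / 2 ^ (bSeq q n) := by
  have H : ∀ n : ℕ, Real.cos ((n : ℝ) * α) = (aSeq u q n : ℝ) / 2 ^ (bSeq q n) ∧
      Real.cos (((n+1 : ℕ) : ℝ) * α) = (aSeq u q (n+1) : ℝ) / 2 ^ (bSeq q (n+1)) := by
    intro n
    induction n with
    | zero =>
      constructor
      · simp [aSeq, bSeq]
      · have : ((1:ℕ):ℝ) * α = α := by norm_num
        rw [this, hcos]
        simp [aSeq, bSeq]
    | succ n ih =>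
      refine ⟨ih.2, ?_⟩
      have key := cos_rec α n
      rw [hcos, ih.1, ih.2] at key
      match n with
      | 0 =>
        rw [key]
        show _ = ((u * u - 2 ^ (2*q+3) : ℤ) : ℝ) / 2 ^ (bSeq q 2)
        simp only [aSeq, bSeq]
        norm_num
        have h2 : (2:ℝ) ^ (q+2) ≠ 0 := by positivity
        field_simp
        ring
      | (m+1) =>
        simp only [show m+1+1 = m+2 from rfl, show m+1+2 = m+3 from rfl] at key ⊢
        rw [key]
        show _ = ((u * aSeq u q (m+2) - 2 ^ (2*q+2) * aSeq u q (m+1) : ℤ) : ℝ) / 2 ^ (bSeq q (m+3))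
        simp only [bSeq]
        norm_num
        have h2 : (2:ℝ) ^ (q+2) ≠ 0 := by positivity
        field_simp
        ring
  exact fun n => (H n).1

theorem cos_multiples_not_integer (α : ℝ) (u : ℤ) (p : ℕ) (hu : Odd u)
    (hup : |u| < 2 ^ p) (hp : 2 ≤ p) (hcos : Real.cos α = (u : ℝ) / 2 ^ p) :
    ∃ (a : ℕ → ℤ) (b : ℕ → ℕ), StrictMono b ∧
      ∀ n : ℕ, 1 ≤ n →
        Odd (a n) ∧ 0 < b n ∧ Real.cos (n * α) = (a n : ℝ) / 2 ^ (b n) ∧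
        ¬ ∃ z : ℤ, (z : ℝ) = Real.cos (n * α) := by
  obtain ⟨q, rfl⟩ : ∃ q, p = q + 2 := ⟨p - 2, by omega⟩
  refine ⟨aSeq u q, bSeq q, ?_, ?_⟩
  · apply strictMono_nat_of_lt_succ
    intro n
    match n with
    | 0 => simp [bSeq]
    | (m+1) =>
      simp only [bSeq, if_neg (by omega : (m+1:ℕ) ≠ 0), if_neg (by omega : (m+2:ℕ) ≠ 0)]
      have e : (m+1+1) * (q+1) = (m+1) * (q+1) + (q+1) := by ring
      omega
  · intro n hn
    have hodd := aSeq_odd u q hu n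
    have hc := aSeq_cos α u q hcos n
    have hb : 0 < bSeq q n := by
      simp only [bSeq, if_neg (by omega : n ≠ 0)]; omega
    refine ⟨hodd, hb, hc, ?_⟩
    rintro ⟨z, hz⟩
    rw [hc] at hz
    have h2 : (2:ℝ) ^ (bSeq q n) ≠ 0 := by positivity
    rw [eq_div_iff h2] at hz
    have hzint : z * 2 ^ (bSeq q n) = aSeq u q n := by exact_mod_cast hz
    have heven : Even (z * 2 ^ (bSeq q n)) :=
      (even_two.pow_of_ne_zero (by omega)).mul_left _
    rw [hzint] at heven
    exact (Int.not_odd_iff_even.mpr heven) hodd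
end

section
/- If all three angles of a triangle with integer side lengths are rational multiples of π, then the triangle is equilateral. -/
open EuclideanGeometry

lemma den_sq_sub_two (r : ℚ) : (r ^ 2 - 2).den = r.den ^ 2 := by
  have hden : ((r.den : ℚ)) ≠ 0 := by exact_mod_cast r.den_ne_zero
  have hd : (0:ℤ) < (r.den:ℤ)^2 := by positivity
  have hcop : IsCoprime (r.num) ((r.den:ℤ)) := by
    rw [Int.isCoprime_iff_gcd_eq_one]
    simpa [Int.gcd] using r.reduced
  have hcop2 : IsCoprime (r.num^2 - 2*(r.den:ℤ)^2) ((r.den:ℤ)^2) := by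
    have h1 : IsCoprime (r.num^2) ((r.den:ℤ)^2) := hcop.pow
    have h2 := h1.add_mul_left_left (-2)
    convert h2 using 1
    case e'_2 => rfl
    case e'_3 => ring
  have hcopn : Nat.Coprime (r.num^2 - 2*(r.den:ℤ)^2).natAbs ((r.den:ℤ)^2).natAbs :=
    Int.isCoprime_iff_gcd_eq_one.mp hcop2
  have hnum : (r.num : ℚ) = r * r.den := by
    have h := Rat.num_div_den r
    rwa [div_eq_iff hden] at h
  have key : r^2 - 2 = ((r.num^2 - 2*(r.den:ℤ)^2 : ℤ) : ℚ) / (((r.den:ℤ)^2 : ℤ) : ℚ) := by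
    rw [eq_div_iff (by positivity)]
    push_cast
    rw [hnum]
    ring
  have h2 : (((r^2 - 2).den : ℤ)) = (r.den:ℤ)^2 := by
    rw [key, Rat.den_div_eq_of_coprime hd hcopn]
  exact_mod_cast h2

lemma niven_den (θ : ℝ) (m n : ℤ) (hn : 0 < n) (hθ : θ = ((m:ℝ)/(n:ℝ)) * Real.pi)
    (q : ℚ) (hq : (q:ℝ) = 2 * Real.cos θ) : q.den = 1 := by
  set g : ℕ → ℚ := fun k => (fun s => s^2 - 2)^[k] q with hg
  have hiter : ∀ k, g (k+1) = (g k)^2 - 2 := fun k => Function.iterate_succ_apply' _ k q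
  have hden : ∀ k, (g k).den = q.den ^ (2^k) := by
    intro k
    induction k with
    | zero => simp [hg]
    | succ k ih =>
      rw [hiter, den_sq_sub_two, ih, ← pow_mul, pow_succ]
  have hval : ∀ k, ((g k : ℚ) : ℝ) = 2 * Real.cos (2^k * θ) := by
    intro k
    induction k with
    | zero => simpa [hg] using hq
    | succ k ih =>
      rw [hiter]
      push_cast
      rw [ih, show (2:ℝ)^(k+1) * θ = 2 * (2^k * θ) by ring, Real.cos_two_mul]
      ring
  set N : ℕ := (2*n).toNat with hNdef
  haveI : NeZero N := ⟨by omega⟩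
  obtain ⟨i, j, hne, heq⟩ := Finite.exists_ne_map_eq_of_infinite
    (f := fun k : ℕ => ((2^k * m : ℤ) : ZMod N))
  have hmain : ∀ i j : ℕ, i < j → ((2^i * m : ℤ) : ZMod N) = ((2^j * m : ℤ) : ZMod N) → q.den = 1 := by
    intro i j hij hmod
    have hdvd : ((N:ℤ)) ∣ (2^j*m - 2^i*m) := ((ZMod.intCast_eq_intCast_iff _ _ _).mp hmod).dvd
    have hN : ((N:ℤ)) = 2*n := Int.toNat_of_nonneg (by omega)
    rw [hN] at hdvd
    obtain ⟨t, ht⟩ := hdvd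
    have hcos : Real.cos (2^j * θ) = Real.cos (2^i * θ) := by
      have hn' : (n:ℝ) ≠ 0 := by exact_mod_cast hn.ne'
      have htR : (2:ℝ)^j * m - 2^i * m = 2*n*t := by exact_mod_cast ht
      have hre : (2:ℝ)^j * θ = 2^i*θ + t * (2*Real.pi) := by
        rw [hθ]
        field_simp
        linear_combination htR
      rw [hre, Real.cos_add_int_mul_two_pi]
    have hgeq : g j = g i := by
      have := (hval j).trans (hcos.symm ▸ (hval i).symm)
      exact_mod_cast this
    have hdeq : q.den ^ (2^j) = q.den ^ (2^i) := by rw [← hden, ← hden, hgeq]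
    by_contra hne1
    have h2 : 2 ≤ q.den := by have := q.pos; omega
    have : q.den ^ (2^i) < q.den ^ (2^j) :=
      Nat.pow_lt_pow_right h2 (Nat.pow_lt_pow_right one_lt_two hij)
    omega
  rcases hne.lt_or_gt with h | h
  · exact hmain i j h heq
  · exact hmain j i h heq.symm

lemma angle_classify (θ : ℝ) (h0 : 0 < θ) (hπ : θ < Real.pi)
    (m n : ℤ) (hn : n ≠ 0) (hθ : θ = ((m:ℝ)/(n:ℝ)) * Real.pi)
    (q : ℚ) (hq : (q:ℝ) = Real.cos θ) :
    θ = Real.pi/3 ∨ θ = Real.pi/2 ∨ θ = 2*Real.pi/3 := by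
  have hq' : ((2*q : ℚ):ℝ) = 2 * Real.cos θ := by push_cast; rw [hq]
  have hden1 : (2*q).den = 1 := by
    rcases hn.lt_or_gt with hneg | hpos
    · refine niven_den θ (-m) (-n) (by omega) ?_ (2*q) hq'
      rw [hθ]; push_cast; rw [neg_div_neg_eq]
    · exact niven_den θ m n hpos hθ (2*q) hq'
  set z : ℤ := (2*q).num with hz
  have hzq : ((z:ℚ)) = 2*q := Rat.coe_int_num_of_den_eq_one hden1
  have hzR : (z:ℝ) = 2 * Real.cos θ := by
    rw [← hq']
    exact_mod_cast congrArg (fun x : ℚ => (x:ℝ)) hzq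
  have hcos1 : Real.cos θ < 1 := by
    have := Real.cos_lt_cos_of_nonneg_of_le_pi (le_refl 0) hπ.le h0
    simpa using this
  have hcos2 : -1 < Real.cos θ := by
    have := Real.cos_lt_cos_of_nonneg_of_le_pi h0.le (le_refl Real.pi) hπ
    simpa using this
  have hzlt : z < 2 := by
    have : (z:ℝ) < 2 := by rw [hzR]; linarith
    exact_mod_cast this
  have hzgt : -2 < z := by
    have : (-2:ℝ) < (z:ℝ) := by rw [hzR]; linarith
    exact_mod_cast this
  have hmem : θ ∈ Set.Icc 0 Real.pi := ⟨h0.le, hπ.le⟩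
  have hpi := Real.pi_pos
  interval_cases z
  · right; right
    refine Real.injOn_cos hmem ⟨by positivity, by linarith⟩ ?_
    rw [show 2*Real.pi/3 = Real.pi - Real.pi/3 by ring, Real.cos_pi_sub, Real.cos_pi_div_three]
    norm_num at hzR ⊢
    linarith
  · right; left
    refine Real.injOn_cos hmem ⟨by positivity, by linarith⟩ ?_
    rw [Real.cos_pi_div_two]
    norm_num at hzR ⊢
    linarith
  · left
    refine Real.injOn_cos hmem ⟨by positivity, by linarith⟩ ?_
    rw [Real.cos_pi_div_three]
    norm_num at hzR ⊢
    linarith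

set_option maxHeartbeats 2000000 in
theorem diophantine_triangle_all_angles_rational_eq
    (A B C : EuclideanSpace ℝ (Fin 2))
    (hABC : AffineIndependent ℝ ![A, B, C])
    (hab : ∃ n : ℕ, 0 < n ∧ dist A B = n)
    (hbc : ∃ n : ℕ, 0 < n ∧ dist B C = n)
    (hca : ∃ n : ℕ, 0 < n ∧ dist C A = n)
    (hA : ∃ m n : ℤ, n ≠ 0 ∧ ∠ B A C = (m / n : ℝ) * Real.pi)
    (hB : ∃ m n : ℤ, n ≠ 0 ∧ ∠ A B C = (m / n : ℝ) * Real.pi)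
    (hC : ∃ m n : ℤ, n ≠ 0 ∧ ∠ B C A = (m / n : ℝ) * Real.pi) :
    dist A B = dist B C ∧ dist B C = dist C A := by
  obtain ⟨nab, hnab, hAB⟩ := hab
  obtain ⟨nbc, hnbc, hBC⟩ := hbc
  obtain ⟨nca, hnca, hCA⟩ := hca
  have ha0 : (0:ℝ) < (nab:ℝ) := by exact_mod_cast hnab
  have hb0 : (0:ℝ) < (nbc:ℝ) := by exact_mod_cast hnbc
  have hc0 : (0:ℝ) < (nca:ℝ) := by exact_mod_cast hnca
  have hncol : ¬Collinear ℝ ({A, B, C} : Set (EuclideanSpace ℝ (Fin 2))) :=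
    affineIndependent_iff_not_collinear_set.mp hABC
  have hncolA : ¬Collinear ℝ ({B, A, C} : Set (EuclideanSpace ℝ (Fin 2))) := by
    rwa [Set.insert_comm]
  have hncolC : ¬Collinear ℝ ({B, C, A} : Set (EuclideanSpace ℝ (Fin 2))) := by
    have hset : ({B, C, A} : Set (EuclideanSpace ℝ (Fin 2))) = {A, B, C} := by
      ext x; simp; tauto
    rwa [hset]
  have hA0 := angle_pos_of_not_collinear hncolA
  have hAπ := angle_lt_pi_of_not_collinear hncolA
  have hB0 := angle_pos_of_not_collinear hncol
  have hBπ := angle_lt_pi_of_not_collinear hncol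
  have hC0 := angle_pos_of_not_collinear hncolC
  have hCπ := angle_lt_pi_of_not_collinear hncolC
  have lawA := EuclideanGeometry.law_cos B A C
  rw [dist_comm B A, hAB, hCA, hBC] at lawA
  have lawB := EuclideanGeometry.law_cos A B C
  rw [hAB, dist_comm C B, hBC, dist_comm A C, hCA] at lawB
  have lawC := EuclideanGeometry.law_cos B C A
  rw [dist_comm B A, hAB, hBC, dist_comm A C, hCA] at lawC
  have hqA : ((((nab:ℚ)^2 + (nca:ℚ)^2 - (nbc:ℚ)^2)/(2*nab*nca) : ℚ) : ℝ) = Real.cos (∠ B A C) := by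
    push_cast
    rw [eq_comm, eq_div_iff (by positivity)]
    linear_combination lawA
  have hqB : ((((nab:ℚ)^2 + (nbc:ℚ)^2 - (nca:ℚ)^2)/(2*nab*nbc) : ℚ) : ℝ) = Real.cos (∠ A B C) := by
    push_cast
    rw [eq_comm, eq_div_iff (by positivity)]
    linear_combination lawB
  have hqC : ((((nbc:ℚ)^2 + (nca:ℚ)^2 - (nab:ℚ)^2)/(2*nbc*nca) : ℚ) : ℝ) = Real.cos (∠ B C A) := by
    push_cast
    rw [eq_comm, eq_div_iff (by positivity)]
    linear_combination lawC
  obtain ⟨mA, nA, hnA, hθA⟩ := hA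
  obtain ⟨mB, nB, hnB, hθB⟩ := hB
  obtain ⟨mC, nC, hnC, hθC⟩ := hC
  have hclsA := angle_classify _ hA0 hAπ mA nA hnA hθA _ hqA
  have hclsB := angle_classify _ hB0 hBπ mB nB hnB hθB _ hqB
  have hclsC := angle_classify _ hC0 hCπ mC nC hnC hθC _ hqC
  have hBA : B ≠ A := (dist_pos.mp (by rw [hAB]; exact ha0)).symm
  have hCA' : C ≠ A := dist_pos.mp (by rw [hCA]; exact hc0)
  have hsum := EuclideanGeometry.angle_add_angle_add_angle_eq_pi (p₁ := A) (p₂ := B) C hBA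
  rw [EuclideanGeometry.angle_comm C A B] at hsum
  have hpi := Real.pi_pos
  have hA3 : ∠ B A C = Real.pi / 3 := by
    rcases hclsA with h1|h1|h1 <;> rcases hclsB with h2|h2|h2 <;> rcases hclsC with h3|h3|h3 <;>
      rw [h2, h3] at hsum <;> rw [h1] <;> linarith
  have hB3 : ∠ A B C = Real.pi / 3 := by
    rcases hclsA with h1|h1|h1 <;> rcases hclsB with h2|h2|h2 <;> rcases hclsC with h3|h3|h3 <;>
      rw [h1, h3] at hsum <;> rw [h2] <;> linarith
  have hC3 : ∠ B C A = Real.pi / 3 := by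
    rcases hclsA with h1|h1|h1 <;> rcases hclsB with h2|h2|h2 <;> rcases hclsC with h3|h3|h3 <;>
      rw [h1, h2] at hsum <;> rw [h3] <;> linarith
  rw [hA3, Real.cos_pi_div_three] at lawA
  rw [hB3, Real.cos_pi_div_three] at lawB
  rw [hC3, Real.cos_pi_div_three] at lawC
  have hcb : (nca:ℝ) = (nbc:ℝ) := by
    have h0 : ((nca:ℝ) - nbc) * (2*((nca:ℝ)+nbc) - nab) = 0 := by nlinarith [lawB, lawC]
    have halt : (nab:ℝ) < (nca:ℝ) + nbc := by nlinarith [lawA]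
    rcases mul_eq_zero.mp h0 with h | h
    · linarith
    · linarith
  have hab' : (nab:ℝ) = (nbc:ℝ) := by
    have h1 : ((nab:ℝ) - nbc) * ((nab:ℝ) + nbc) = 0 := by nlinarith [lawA, hcb]
    rcases mul_eq_zero.mp h1 with h | h
    · linarith
    · linarith
  refine ⟨?_, ?_⟩
  · rw [hAB, hBC]; exact hab'
  · rw [hBC, hCA]; exact hcb.symm
end

section
/- If one angle of a triangle with integer side lengths is a rational multiple of π, then that angle equals π/3, π/2, or 2π/3. -/
/-!
By the law of cosines, the cosine of an angle of a triangle with rational sides is rational.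
Niven's theorem then leaves only `0, π/3, π/2, 2π/3, π` for an angle in `[0, π]` that is a
rational multiple of `π`, and a nondegenerate triangle excludes `0` and `π`.
-/

open EuclideanGeometry

namespace EuclideanGeometry

variable {V P : Type*} [NormedAddCommGroup V] [InnerProductSpace ℝ V] [MetricSpace P]
  [NormedAddTorsor V P]

theorem exists_rat_cos_angle_of_dist_eq_rat {p₁ p₂ p₃ : P} {a b c : ℚ}
    (h₁₂ : dist p₁ p₂ = a) (h₃₂ : dist p₃ p₂ = b) (h₁₃ : dist p₁ p₃ = c) :
    ∃ q : ℚ, Real.cos (∠ p₁ p₂ p₃) = q := by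
  rcases eq_or_ne p₁ p₂ with rfl | hp₁
  · exact ⟨0, by simp [angle_self_left]⟩
  rcases eq_or_ne p₃ p₂ with rfl | hp₃
  · exact ⟨0, by simp [angle_self_right]⟩
  refine ⟨(a ^ 2 + b ^ 2 - c ^ 2) / (2 * a * b), ?_⟩
  have ha : (a : ℝ) ≠ 0 := h₁₂ ▸ dist_ne_zero.2 hp₁
  have hb : (b : ℝ) ≠ 0 := h₃₂ ▸ dist_ne_zero.2 hp₃
  have hlaw := law_cos p₁ p₂ p₃
  rw [h₁₂, h₃₂, h₁₃] at hlaw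
  push_cast
  field_simp
  linarith

end EuclideanGeometry

theorem diophantine_triangle_rational_angle
    (A B C : EuclideanSpace ℝ (Fin 2))
    (hABC : AffineIndependent ℝ ![A, B, C])
    (hab : ∃ n : ℕ, 0 < n ∧ dist A B = n)
    (hbc : ∃ n : ℕ, 0 < n ∧ dist B C = n)
    (hca : ∃ n : ℕ, 0 < n ∧ dist C A = n)
    (hA : ∃ m n : ℤ, n ≠ 0 ∧ ∠ B A C = (m / n : ℝ) * Real.pi) :
    ∠ B A C = Real.pi / 3 ∨ ∠ B A C = Real.pi / 2 ∨ ∠ B A C = 2 * Real.pi / 3 := by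
  obtain ⟨dAB, -, hAB⟩ := hab
  obtain ⟨dBC, -, hBC⟩ := hbc
  obtain ⟨dCA, -, hCA⟩ := hca
  obtain ⟨m, n, -, hθ⟩ := hA
  have hcos : ∃ q : ℚ, Real.cos (∠ B A C) = q :=
    exists_rat_cos_angle_of_dist_eq_rat (a := dAB) (b := dCA) (c := dBC)
      (by rw [dist_comm]; exact_mod_cast hAB) (by exact_mod_cast hCA) (by exact_mod_cast hBC)
  have hrat : ∃ r : ℚ, ∠ B A C = r * Real.pi := ⟨m / n, by rw [hθ]; push_cast; rfl⟩
  have hncol : ¬Collinear ℝ ({B, A, C} : Set (EuclideanSpace ℝ (Fin 2))) := by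
    rw [Set.insert_comm]
    exact affineIndependent_iff_not_collinear_set.mp hABC
  rcases niven_angle_eq hrat hcos ⟨angle_nonneg B A C, angle_le_pi B A C⟩ with
    h | h | h | h | h
  · exact absurd h (angle_ne_zero_of_not_collinear hncol)
  · exact .inl h
  · exact .inr (.inl h)
  · exact .inr (.inr (by rw [h]; ring))
  · exact absurd h (angle_ne_pi_of_not_collinear hncol)
end

section
/- If M is a point in the plane of a square ABCD with side length a a positive integer, such that the distances from M to all four vertices are positive integers, then none of the angles ∠AMB, ∠BMC, ∠CMD, ∠DMA equals π/3. -/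
/-!
Put the corner `A` at the origin and let `p, q, s` be the distances from `M` to `A, B, D`.
The coordinates of `M` are `(a² + p² - s²) / 2a` and `(a² + p² - q²) / 2a`, so
`(a² + p² - q²)² + (a² + p² - s²)² = 4a²p²`. If `∠AMB = π/3`, the law of cosines gives
`a² = p² + q² - pq`, hence `a² + p² - q² = p(2p - q)`, and substituting leaves
`(a² + p² - s²)² = 3(pq)²`, which has no solution in integers with `pq ≠ 0`.
The other three angles are handled by the same argument at the other corners.
-/

open EuclideanGeometry

theorem Int.sq_ne_three_mul_sq {k n : ℤ} (hn : n ≠ 0) : k ^ 2 ≠ 3 * n ^ 2 := by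
  intro h
  have : IsSquare (3 : ℚ) := ⟨k / n, by field_simp; exact_mod_cast h.symm⟩
  norm_num at this

theorem Int.sq_ne_sq_add_sq_sub_mul_of_corner {a p q s : ℤ} (hp : p ≠ 0) (hq : q ≠ 0)
    (hcorner : (a ^ 2 + p ^ 2 - q ^ 2) ^ 2 + (a ^ 2 + p ^ 2 - s ^ 2) ^ 2 = 4 * a ^ 2 * p ^ 2) :
    a ^ 2 ≠ p ^ 2 + q ^ 2 - p * q := by
  intro hcos
  apply Int.sq_ne_three_mul_sq (k := a ^ 2 + p ^ 2 - s ^ 2) (mul_ne_zero hp hq)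
  linear_combination hcorner + (p ^ 2 + q ^ 2 + p * q - a ^ 2) * hcos

namespace EuclideanGeometry

variable {V P : Type*} [NormedAddCommGroup V] [InnerProductSpace ℝ V] [MetricSpace P]
  [NormedAddTorsor V P]

theorem dist_sq_eq_of_angle_eq_pi_div_three {X M Y : P} (h : ∠ X M Y = Real.pi / 3) :
    dist X Y ^ 2 = dist X M ^ 2 + dist Y M ^ 2 - dist X M * dist Y M := by
  have := law_cos X M Y
  rw [h, Real.cos_pi_div_three] at this
  linear_combination this

theorem angle_ne_pi_div_three_of_corner {X M Y : P} {a p q s : ℕ} (hp : 0 < p) (hq : 0 < q)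
    (hXY : dist X Y = a) (hMX : dist M X = p) (hMY : dist M Y = q)
    (hcorner : ((a : ℝ) ^ 2 + p ^ 2 - q ^ 2) ^ 2 + (a ^ 2 + p ^ 2 - s ^ 2) ^ 2 = 4 * a ^ 2 * p ^ 2) :
    ∠ X M Y ≠ Real.pi / 3 := by
  intro h
  have hcos := dist_sq_eq_of_angle_eq_pi_div_three h
  rw [hXY, dist_comm X, dist_comm Y, hMX, hMY] at hcos
  exact Int.sq_ne_sq_add_sq_sub_mul_of_corner (a := a) (p := p) (q := q) (s := s)
    (by positivity) (by positivity) (by exact_mod_cast hcorner) (by exact_mod_cast hcos)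

end EuclideanGeometry

theorem EuclideanSpace.dist_sq_fin_two (x y : EuclideanSpace ℝ (Fin 2)) :
    dist x y ^ 2 = (x 0 - y 0) ^ 2 + (x 1 - y 1) ^ 2 := by
  simp [EuclideanSpace.dist_sq_eq, Fin.sum_univ_two, Real.dist_eq, sq_abs]

theorem steinhaus_square_no_pi_div_three_general
    (a : ℕ) (M : EuclideanSpace ℝ (Fin 2))
    (A B C D : EuclideanSpace ℝ (Fin 2))
    (hA : A = !₂[0, 0]) (hB : B = !₂[0, (a : ℝ)])
    (hC : C = !₂[(a : ℝ), (a : ℝ)]) (hD : D = !₂[(a : ℝ), 0])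
    (hMA : ∃ n : ℕ, 0 < n ∧ dist M A = n)
    (hMB : ∃ n : ℕ, 0 < n ∧ dist M B = n)
    (hMC : ∃ n : ℕ, 0 < n ∧ dist M C = n)
    (hMD : ∃ n : ℕ, 0 < n ∧ dist M D = n) :
    ∠ A M B ≠ Real.pi / 3 ∧ ∠ B M C ≠ Real.pi / 3 ∧
    ∠ C M D ≠ Real.pi / 3 ∧ ∠ D M A ≠ Real.pi / 3 := by
  obtain ⟨p, hp, hMA⟩ := hMA
  obtain ⟨q, hq, hMB⟩ := hMB
  obtain ⟨r, hr, hMC⟩ := hMC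
  obtain ⟨s, hs, hMD⟩ := hMD
  subst hA hB hC hD
  have side {X Y : EuclideanSpace ℝ (Fin 2)} (h : dist X Y ^ 2 = (a : ℝ) ^ 2) : dist X Y = a := by
    rwa [sq_eq_sq₀ dist_nonneg a.cast_nonneg] at h
  -- each angle is taken at a corner; `s :=` is the distance to that corner's other neighbour
  refine ⟨angle_ne_pi_div_three_of_corner (s := s) hp hq (side ?_) hMA hMB ?_,
    angle_ne_pi_div_three_of_corner (s := p) hq hr (side ?_) hMB hMC ?_,
    angle_ne_pi_div_three_of_corner (s := q) hr hs (side ?_) hMC hMD ?_,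
    angle_ne_pi_div_three_of_corner (s := r) hs hp (side ?_) hMD hMA ?_⟩
  all_goals
    simp only [← hMA, ← hMB, ← hMC, ← hMD, EuclideanSpace.dist_sq_fin_two,
      Matrix.cons_val_zero, Matrix.cons_val_one, Matrix.cons_val_fin_one]
    ring

theorem steinhaus_square_no_pi_div_three
    (a : ℕ) (ha : 0 < a) (M : EuclideanSpace ℝ (Fin 2))
    (A B C D : EuclideanSpace ℝ (Fin 2))
    (hA : A = !₂[0, 0]) (hB : B = !₂[0, (a : ℝ)])
    (hC : C = !₂[(a : ℝ), (a : ℝ)]) (hD : D = !₂[(a : ℝ), 0])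
    (hMA : ∃ n : ℕ, 0 < n ∧ dist M A = n)
    (hMB : ∃ n : ℕ, 0 < n ∧ dist M B = n)
    (hMC : ∃ n : ℕ, 0 < n ∧ dist M C = n)
    (hMD : ∃ n : ℕ, 0 < n ∧ dist M D = n) :
    ∠ A M B ≠ Real.pi / 3 ∧ ∠ B M C ≠ Real.pi / 3 ∧
    ∠ C M D ≠ Real.pi / 3 ∧ ∠ D M A ≠ Real.pi / 3 :=
  steinhaus_square_no_pi_div_three_general a M A B C D hA hB hC hD hMA hMB hMC hMD
end

section
/- If M is a point in the plane of a square ABCD with integer side length such that the distances from M to all four vertices are positive integers, then none of the angles ∠AMB, ∠BMC, ∠CMD, ∠DMA equals 2π/3. -/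
/-!
If `∠AMB = 2π/3`, the law of cosines gives `a² = p² + q² + pq` for `p = MA`, `q = MB`.
With `A` at the origin, `B = (0, a)` and `D = (a, 0)`, the point `M` has coordinates
`((a² + p² - s²) / 2a, (a² + p² - q²) / 2a)`, where `s = MD`, so `MA² = p²` reads
`4a²p² = (a² + p² - q²)² + (a² + p² - s²)²`. Since `a² + p² - q² = p(2p + q)`, this becomes
`(a² + p² - s²)² = 3(pq)²`, which has no integer solution with `pq ≠ 0` because `√3` is
irrational. The other three angles reduce to this one by the quarter-turn symmetry of the square.
-/

open EuclideanGeometry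

theorem Int.eq_zero_of_sq_eq_three_mul_sq {m n : ℤ} (h : m ^ 2 = 3 * n ^ 2) : n = 0 := by
  by_contra hn
  have h3 : IsSquare ((3 : ℤ) : ℚ) := ⟨m / n, by field_simp; exact_mod_cast h.symm⟩
  exact Int.prime_three.irreducible.not_isSquare (Rat.isSquare_intCast_iff.mp h3)

theorem Int.mul_eq_zero_of_square_corner_relation {a p q s : ℤ}
    (hcorner : 4 * a ^ 2 * p ^ 2 = (a ^ 2 + p ^ 2 - q ^ 2) ^ 2 + (a ^ 2 + p ^ 2 - s ^ 2) ^ 2)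
    (h : a ^ 2 = p ^ 2 + q ^ 2 + p * q) : p * q = 0 :=
  Int.eq_zero_of_sq_eq_three_mul_sq (m := a ^ 2 + p ^ 2 - s ^ 2) <| by
    linear_combination -hcorner - (a ^ 2 - p ^ 2 - q ^ 2 + p * q) * h

theorem dist_sq_eq_of_angle_eq_two_pi_div_three {V P : Type*} [NormedAddCommGroup V]
    [InnerProductSpace ℝ V] [MetricSpace P] [NormedAddTorsor V P] {X M Y : P}
    (h : ∠ X M Y = 2 * Real.pi / 3) :
    dist X Y ^ 2 = dist M X ^ 2 + dist M Y ^ 2 + dist M X * dist M Y := by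
  have hcos : Real.cos (2 * Real.pi / 3) = -(1 / 2) := by
    rw [show 2 * Real.pi / 3 = Real.pi - Real.pi / 3 by ring, Real.cos_pi_sub,
      Real.cos_pi_div_three]
  have hlaw := law_cos X M Y
  rw [h, hcos, dist_comm X M, dist_comm Y M] at hlaw
  linear_combination hlaw

namespace EuclideanSpace

theorem dist_vec2_sq (M : EuclideanSpace ℝ (Fin 2)) (x y : ℝ) :
    dist M !₂[x, y] ^ 2 = (M 0 - x) ^ 2 + (M 1 - y) ^ 2 := by
  rw [EuclideanSpace.dist_eq, Real.sq_sqrt (by positivity)]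
  simp [Fin.sum_univ_two, Real.dist_eq, sq_abs]

theorem square_corner_relation (a : ℝ) (N : EuclideanSpace ℝ (Fin 2)) :
    4 * a ^ 2 * dist N !₂[0, 0] ^ 2 =
      (a ^ 2 + dist N !₂[0, 0] ^ 2 - dist N !₂[0, a] ^ 2) ^ 2 +
        (a ^ 2 + dist N !₂[0, 0] ^ 2 - dist N !₂[a, 0] ^ 2) ^ 2 := by
  simp only [dist_vec2_sq]
  ring

def quarterTurn (a : ℝ) (M : EuclideanSpace ℝ (Fin 2)) : EuclideanSpace ℝ (Fin 2) :=
  !₂[a - M 1, M 0]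

theorem dist_quarterTurn_sq (a x y : ℝ) (M : EuclideanSpace ℝ (Fin 2)) :
    dist (quarterTurn a M) !₂[x, y] ^ 2 = dist M !₂[y, a - x] ^ 2 := by
  simp only [dist_vec2_sq, quarterTurn, Matrix.cons_val_zero, Matrix.cons_val_one,
    Matrix.cons_val_fin_one]
  ring

end EuclideanSpace

theorem sq_ne_sq_add_sq_add_mul_of_square_corner (a p q s : ℕ) (N : EuclideanSpace ℝ (Fin 2))
    (hp : 0 < p) (hq : 0 < q) (hA : dist N !₂[0, 0] ^ 2 = p ^ 2)
    (hB : dist N !₂[0, (a : ℝ)] ^ 2 = q ^ 2) (hD : dist N !₂[(a : ℝ), 0] ^ 2 = s ^ 2) :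
    (a : ℝ) ^ 2 ≠ p ^ 2 + q ^ 2 + p * q := by
  intro h
  have hcorner := EuclideanSpace.square_corner_relation a N
  rw [hA, hB, hD] at hcorner
  have hpq : (p : ℤ) * q = 0 := Int.mul_eq_zero_of_square_corner_relation (a := a) (s := s)
    (by exact_mod_cast hcorner) (by exact_mod_cast h)
  exact (by positivity : (0 : ℤ) < p * q).ne' hpq

theorem steinhaus_square_no_two_pi_div_three_general
    (a : ℕ) (M : EuclideanSpace ℝ (Fin 2))
    (A B C D : EuclideanSpace ℝ (Fin 2))
    (hA : A = !₂[0, 0]) (hB : B = !₂[0, (a : ℝ)])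
    (hC : C = !₂[(a : ℝ), (a : ℝ)]) (hD : D = !₂[(a : ℝ), 0])
    (hMA : ∃ n : ℕ, 0 < n ∧ dist M A = n)
    (hMB : ∃ n : ℕ, 0 < n ∧ dist M B = n)
    (hMC : ∃ n : ℕ, 0 < n ∧ dist M C = n)
    (hMD : ∃ n : ℕ, 0 < n ∧ dist M D = n) :
    ∠ A M B ≠ 2 * Real.pi / 3 ∧ ∠ B M C ≠ 2 * Real.pi / 3 ∧
    ∠ C M D ≠ 2 * Real.pi / 3 ∧ ∠ D M A ≠ 2 * Real.pi / 3 := by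
  obtain ⟨p, hp, hMA⟩ := hMA
  obtain ⟨q, hq, hMB⟩ := hMB
  obtain ⟨r, hr, hMC⟩ := hMC
  obtain ⟨s, hs, hMD⟩ := hMD
  subst hA hB hC hD
  have law : ∀ {X Y : EuclideanSpace ℝ (Fin 2)} {m n : ℕ}, dist X Y ^ 2 = a ^ 2 →
      ∠ X M Y = 2 * Real.pi / 3 → dist M X = m → dist M Y = n →
      (a : ℝ) ^ 2 = m ^ 2 + n ^ 2 + m * n :=
    fun hXY h hX hY => by rw [← hXY, dist_sq_eq_of_angle_eq_two_pi_div_three h, hX, hY]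
  open EuclideanSpace in
  refine ⟨fun h => ?_, fun h => ?_, fun h => ?_, fun h => ?_⟩
  · refine sq_ne_sq_add_sq_add_mul_of_square_corner a p q s M hp hq ?_ ?_ ?_
      (law (by simp [dist_vec2_sq]) h hMA hMB)
    all_goals simp only [hMA, hMB, hMD]
  · refine sq_ne_sq_add_sq_add_mul_of_square_corner a q r p (quarterTurn a M) hq hr ?_ ?_ ?_
      (law (by simp [dist_vec2_sq]) h hMB hMC)
    all_goals simp only [dist_quarterTurn_sq, sub_zero, sub_self, hMA, hMB, hMC]
  · refine sq_ne_sq_add_sq_add_mul_of_square_corner a r s q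
      (quarterTurn a (quarterTurn a M)) hr hs ?_ ?_ ?_ (law (by simp [dist_vec2_sq]) h hMC hMD)
    all_goals simp only [dist_quarterTurn_sq, sub_zero, sub_self, hMB, hMC, hMD]
  · refine sq_ne_sq_add_sq_add_mul_of_square_corner a s p r
      (quarterTurn a (quarterTurn a (quarterTurn a M))) hs hp ?_ ?_ ?_
      (law (by simp [dist_vec2_sq]) h hMD hMA)
    all_goals simp only [dist_quarterTurn_sq, sub_zero, sub_self, hMA, hMC, hMD]

theorem steinhaus_square_no_two_pi_div_three
    (a : ℕ) (ha : 0 < a) (M : EuclideanSpace ℝ (Fin 2))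
    (A B C D : EuclideanSpace ℝ (Fin 2))
    (hA : A = !₂[0, 0]) (hB : B = !₂[0, (a : ℝ)])
    (hC : C = !₂[(a : ℝ), (a : ℝ)]) (hD : D = !₂[(a : ℝ), 0])
    (hMA : ∃ n : ℕ, 0 < n ∧ dist M A = n)
    (hMB : ∃ n : ℕ, 0 < n ∧ dist M B = n)
    (hMC : ∃ n : ℕ, 0 < n ∧ dist M C = n)
    (hMD : ∃ n : ℕ, 0 < n ∧ dist M D = n) :
    ∠ A M B ≠ 2 * Real.pi / 3 ∧ ∠ B M C ≠ 2 * Real.pi / 3 ∧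
    ∠ C M D ≠ 2 * Real.pi / 3 ∧ ∠ D M A ≠ 2 * Real.pi / 3 :=
  steinhaus_square_no_two_pi_div_three_general a M A B C D hA hB hC hD hMA hMB hMC hMD
end

section
/- All solutions in positive integers X, Y, Z with gcd(X,Y,Z) = 1 of the equation X² + XY + Y² = Z² are given (up to swapping X and Y) by X = y² − x², Y = x² + 2xy, Z = x² + xy + y² for positive integers x < y with gcd(x,y) = 1 and appropriate parity conditions. -/
set_option maxHeartbeats 1600000 in
theorem eisenstein_param (X Y Z : ℕ) (hX : 0 < X) (hY : 0 < Y) (hZ : 0 < Z)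
    (hgcd : Nat.gcd (Nat.gcd X Y) Z = 1)
    (heq : X ^ 2 + X * Y + Y ^ 2 = Z ^ 2) :
    ∃ x y : ℕ, 0 < x ∧ x < y ∧ Nat.gcd x y = 1 ∧
      ((X = y ^ 2 - x ^ 2 ∧ Y = x ^ 2 + 2 * x * y) ∨
       (Y = y ^ 2 - x ^ 2 ∧ X = x ^ 2 + 2 * x * y)) ∧
      Z = x ^ 2 + x * y + y ^ 2 := by
  -- pairwise coprimality
  have hXY : Nat.Coprime X Y := by
    have h2 : Nat.gcd X Y ^ 2 ∣ Z ^ 2 := by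
      rw [← heq]
      exact dvd_add (dvd_add (pow_dvd_pow_of_dvd (Nat.gcd_dvd_left X Y) 2)
        (mul_dvd_mul (by simpa [sq] using (pow_dvd_pow_of_dvd (Nat.gcd_dvd_left X Y) 1))
          (by simpa [sq] using (pow_dvd_pow_of_dvd (Nat.gcd_dvd_right X Y) 1))))
        (pow_dvd_pow_of_dvd (Nat.gcd_dvd_right X Y) 2)
    have h1 : Nat.gcd X Y ∣ Z := (Nat.pow_dvd_pow_iff (by norm_num)).mp h2
    have : Nat.gcd X Y ∣ 1 := hgcd ▸ Nat.dvd_gcd dvd_rfl h1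
    exact Nat.dvd_one.mp this
  have hXZ : Nat.Coprime X Z := by
    set d := Nat.gcd X Z with hd
    have hdX : d ∣ X := Nat.gcd_dvd_left X Z
    have hdZ : d ∣ Z := Nat.gcd_dvd_right X Z
    have hdY2 : d ∣ Y ^ 2 := by
      have h1 : Y ^ 2 = Z ^ 2 - (X ^ 2 + X * Y) := by omega
      rw [h1]
      exact Nat.dvd_sub (dvd_pow hdZ (by norm_num))
        (dvd_add (dvd_pow hdX (by norm_num)) (hdX.mul_right Y))
    have hco : Nat.Coprime d (Y ^ 2) := (Nat.Coprime.coprime_dvd_left hdX hXY).pow_right 2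
    exact hco.eq_one_of_dvd hdY2
  have hYZ : Nat.Coprime Y Z := by
    set d := Nat.gcd Y Z with hd
    have hdY : d ∣ Y := Nat.gcd_dvd_left Y Z
    have hdZ : d ∣ Z := Nat.gcd_dvd_right Y Z
    have hdX2 : d ∣ X ^ 2 := by
      have h1 : X ^ 2 = Z ^ 2 - (X * Y + Y ^ 2) := by omega
      rw [h1]
      exact Nat.dvd_sub (dvd_pow hdZ (by norm_num))
        (dvd_add (hdY.mul_left X) (dvd_pow hdY (by norm_num)))
    have hco : Nat.Coprime d (X ^ 2) := (Nat.Coprime.coprime_dvd_left hdY hXY.symm).pow_right 2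
    exact hco.eq_one_of_dvd hdX2
  -- inequalities
  have hYltZ : Y < Z := by
    by_contra h
    push_neg at h
    have : Z ^ 2 ≤ Y ^ 2 := Nat.pow_le_pow_left h 2
    nlinarith
  have hXltZ : X < Z := by
    by_contra h
    push_neg at h
    have : Z ^ 2 ≤ X ^ 2 := Nat.pow_le_pow_left h 2
    nlinarith
  have hZlt : Z < X + 2 * Y := by
    by_contra h
    push_neg at h
    have : (X + 2 * Y) ^ 2 ≤ Z ^ 2 := Nat.pow_le_pow_left h 2
    nlinarith
  set a := Z - Y with hadef
  set b := Z + X with hbdef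
  have ha : 0 < a := by omega
  have hb2a : 2 * a < b := by omega
  have heqZ : (X : ℤ) ^ 2 + X * Y + Y ^ 2 = Z ^ 2 := by exact_mod_cast heq
  have H1 : X * (a ^ 2 + b ^ 2) + Z * a ^ 2 = X * (a * b) + 2 * (Z * (a * b)) := by
    rw [hadef, hbdef]
    zify [hYltZ.le]
    linear_combination ((X : ℤ) + Z) * heqZ
  have H2 : Y * (a ^ 2 + b ^ 2) + 2 * (Z * (a * b)) = Y * (a * b) + Z * b ^ 2 := by
    rw [hadef, hbdef]
    zify [hYltZ.le]
    linear_combination ((Y : ℤ) - Z) * heqZ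
  set g := Nat.gcd a b with hgdef
  have hg : 0 < g := Nat.gcd_pos_of_pos_left b ha
  set m := a / g with hmdef
  set n := b / g with hndef
  have ham : a = g * m := (Nat.mul_div_cancel' (Nat.gcd_dvd_left a b)).symm
  have hbn : b = g * n := (Nat.mul_div_cancel' (Nat.gcd_dvd_right a b)).symm
  have hmn : Nat.Coprime m n := Nat.coprime_div_gcd_div_gcd hg
  have hm : 0 < m := by
    rcases Nat.eq_zero_or_pos m with h | h
    · rw [h, mul_zero] at ham; omega
    · exact h
  have hn2m : 2 * m < n := by
    have : g * (2 * m) < g * n := by rw [ham, hbn] at hb2a; ring_nf at hb2a ⊢; omega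
    exact Nat.lt_of_mul_lt_mul_left this
  -- reduced identities
  have H1' : X * (m ^ 2 + n ^ 2) + Z * m ^ 2 = X * (m * n) + 2 * (Z * (m * n)) := by
    rw [ham, hbn] at H1
    apply Nat.eq_of_mul_eq_mul_left (show 0 < g * g from Nat.mul_pos hg hg)
    ring_nf at H1 ⊢
    linarith
  have H2' : Y * (m ^ 2 + n ^ 2) + 2 * (Z * (m * n)) = Y * (m * n) + Z * n ^ 2 := by
    rw [ham, hbn] at H2
    apply Nat.eq_of_mul_eq_mul_left (show 0 < g * g from Nat.mul_pos hg hg)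
    ring_nf at H2 ⊢
    linarith
  clear_value a b g m n
  obtain ⟨N, hNdef⟩ : ∃ N, N = n ^ 2 + m ^ 2 - m * n := ⟨_, rfl⟩
  obtain ⟨M1, hM1def⟩ : ∃ M1, M1 = m * (2 * n - m) := ⟨_, rfl⟩
  obtain ⟨M2, hM2def⟩ : ∃ M2, M2 = n * (n - 2 * m) := ⟨_, rfl⟩
  have hmn2 : m * n ≤ n ^ 2 := by rw [pow_two]; exact Nat.mul_le_mul_right n (by omega)
  have hmnle : m * n ≤ n ^ 2 + m ^ 2 := le_trans hmn2 (Nat.le_add_right _ _)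
  have H1Z : (X : ℤ) * (m ^ 2 + n ^ 2) + Z * m ^ 2 = X * (m * n) + 2 * (Z * (m * n)) := by
    exact_mod_cast congrArg (Nat.cast : ℕ → ℤ) H1'
  have H2Z : (Y : ℤ) * (m ^ 2 + n ^ 2) + 2 * (Z * (m * n)) = Y * (m * n) + Z * n ^ 2 := by
    exact_mod_cast congrArg (Nat.cast : ℕ → ℤ) H2'
  have hNX : X * N = Z * M1 := by
    rw [hNdef, hM1def]
    zify [hmnle, show m ≤ 2 * n by omega]
    linear_combination H1Z
  have hNY : Y * N = Z * M2 := by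
    rw [hNdef, hM2def]
    zify [hmnle, show 2 * m ≤ n by omega]
    linear_combination H2Z
  have hZdvdN : Z ∣ N := hXZ.symm.dvd_of_dvd_mul_left ⟨M1, hNX⟩
  obtain ⟨k, hkdef⟩ : ∃ k, k = N / Z := ⟨_, rfl⟩
  have hkN : N = Z * k := by rw [hkdef]; exact (Nat.mul_div_cancel' hZdvdN).symm
  have hNpos : 0 < N := by
    have h1 : m * n < n ^ 2 + m ^ 2 :=
      lt_of_le_of_lt hmn2 (Nat.lt_add_of_pos_right (pow_pos hm 2))
    rw [hNdef]
    exact Nat.sub_pos_of_lt h1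
  have hk : 0 < k := by
    rcases Nat.eq_zero_or_pos k with h | h
    · rw [h, mul_zero] at hkN; omega
    · exact h
  have hM1k : M1 = X * k := by
    apply Nat.eq_of_mul_eq_mul_left hZ
    rw [← hNX, hkN]; ring
  have hM2k : M2 = Y * k := by
    apply Nat.eq_of_mul_eq_mul_left hZ
    rw [← hNY, hkN]; ring
  have hkdvdN : k ∣ N := ⟨Z, by rw [hkN]; ring⟩
  -- coprime k m
  have hkm : Nat.Coprime k m := by
    set d := Nat.gcd k m with hddef
    have hdk : d ∣ k := Nat.gcd_dvd_left k m
    have hdm : d ∣ m := Nat.gcd_dvd_right k m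
    have hdN : d ∣ N := hdk.trans hkdvdN
    have hdn2 : d ∣ n ^ 2 := by
      have h1 : n ^ 2 = (N + m * n) - m * m := by
        have : N + m * n = n ^ 2 + m ^ 2 := by omega
        rw [this]; ring_nf; omega
      rw [h1]
      exact Nat.dvd_sub (dvd_add hdN (hdm.mul_right n)) (hdm.mul_right m)
    have hco : Nat.Coprime d (n ^ 2) := (Nat.Coprime.coprime_dvd_left hdm hmn).pow_right 2
    exact hco.eq_one_of_dvd hdn2
  have hkdvd2nm : k ∣ 2 * n - m := by
    have h1 : k ∣ m * (2 * n - m) := by rw [← hM1def, hM1k]; exact ⟨X, by ring⟩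
    exact hkm.dvd_of_dvd_mul_left h1
  have hk3 : k ∣ 3 := by
    have h4N : (2 * n - m) ^ 2 + 3 * m ^ 2 = 4 * N := by
      rw [hNdef]
      zify [show m ≤ 2 * n by omega, hmnle]
      ring
    have h1 : k ∣ 3 * m ^ 2 := by
      have h2 : 3 * m ^ 2 = 4 * N - (2 * n - m) ^ 2 := by omega
      rw [h2]
      exact Nat.dvd_sub (hkdvdN.mul_left 4) (dvd_pow hkdvd2nm (by norm_num))
    exact (hkm.pow_right 2).dvd_of_dvd_mul_right h1
  rcases (Nat.dvd_prime Nat.prime_three).mp hk3 with hk1 | hk1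
  · -- k = 1 case : x = m, y = n - m, gives (Y, X) branch
    refine ⟨m, n - m, hm, by omega, ?_, Or.inr ⟨?_, ?_⟩, ?_⟩
    · have hd : Nat.gcd m (n - m) ∣ n := by
        have h1 := Nat.gcd_dvd_left m (n - m)
        have h2 := Nat.gcd_dvd_right m (n - m)
        have h4 : Nat.gcd m (n - m) ∣ (n - m) + m := dvd_add h2 h1
        rwa [Nat.sub_add_cancel (by omega : m ≤ n)] at h4
      have : Nat.gcd m (n - m) ∣ 1 := hmn ▸ Nat.dvd_gcd (Nat.gcd_dvd_left m (n - m)) hd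
      exact Nat.dvd_one.mp this
    · -- Y = (n-m)^2 - m^2
      have hYM2 : Y = M2 := by rw [hM2k, hk1, mul_one]
      have h1 : (n - m) ^ 2 = m ^ 2 + Y := by
        rw [hYM2, hM2def]
        zify [show m ≤ n by omega, show 2 * m ≤ n by omega]
        ring
      omega
    · -- X = m^2 + 2*m*(n-m)
      have hXM1 : X = M1 := by rw [hM1k, hk1, mul_one]
      rw [hXM1, hM1def]
      zify [show m ≤ 2 * n by omega, show m ≤ n by omega]
      ring
    · -- Z = m^2 + m*(n-m) + (n-m)^2
      have hZN : Z = N := by rw [hkN, hk1, mul_one]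
      rw [hZN, hNdef]
      zify [hmnle, show m ≤ n by omega]
      ring
  · -- k = 3 case : x = (n-2m)/3, y = (n+m)/3, gives (X, Y) branch
    rw [hk1] at hkdvd2nm hM1k hM2k hkN
    have h3x : (3 : ℕ) ∣ n - 2 * m := by omega
    have h3y : (3 : ℕ) ∣ n + m := by omega
    obtain ⟨x, hxdef⟩ : ∃ x, x = (n - 2 * m) / 3 := ⟨_, rfl⟩
    obtain ⟨y, hydef⟩ : ∃ y, y = (n + m) / 3 := ⟨_, rfl⟩
    have hx3 : 3 * x = n - 2 * m := by rw [hxdef]; exact Nat.mul_div_cancel' h3x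
    have hy3 : 3 * y = n + m := by rw [hydef]; exact Nat.mul_div_cancel' h3y
    have hxpos : 0 < x := by omega
    have hxy : x < y := by omega
    have hyx : y = x + m := by omega
    have hx2y : x + 2 * y = n := by omega
    refine ⟨x, y, hxpos, hxy, ?_, Or.inl ⟨?_, ?_⟩, ?_⟩
    · have hdx := Nat.gcd_dvd_left x y
      have hdy := Nat.gcd_dvd_right x y
      have hdm : Nat.gcd x y ∣ m := by
        have : m = y - x := by omega
        rw [this]; exact Nat.dvd_sub hdy hdx
      have hdn : Nat.gcd x y ∣ n := by
        rw [← hx2y]; exact dvd_add hdx (hdy.mul_left 2)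
      have : Nat.gcd x y ∣ 1 := hmn ▸ Nat.dvd_gcd hdm hdn
      exact Nat.dvd_one.mp this
    · -- X = y^2 - x^2
      have hM1Z : (m : ℤ) * (2 * n - m) = X * 3 := by
        have := congrArg (Nat.cast : ℕ → ℤ) hM1k
        rw [hM1def] at this
        push_cast [show m ≤ 2 * n by omega] at this
        linarith
      have hx3Z : (3 : ℤ) * x = n - 2 * m := by
        have := congrArg (Nat.cast : ℕ → ℤ) hx3
        push_cast [show 2 * m ≤ n by omega] at this
        linarith
      have hy3Z : (3 : ℤ) * y = n + m := by exact_mod_cast congrArg (Nat.cast : ℕ → ℤ) hy3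
      have h9 : 9 * y ^ 2 = 9 * x ^ 2 + 9 * X := by
        have hgoal : (9 : ℤ) * y ^ 2 = 9 * x ^ 2 + 9 * X := by
          linear_combination (3*(y:ℤ) + ((n:ℤ)+m)) * hy3Z - (3*(x:ℤ) + ((n:ℤ)-2*m)) * hx3Z + 3 * hM1Z
        exact_mod_cast hgoal
      have h2 : y ^ 2 = x ^ 2 + X := by omega
      omega
    · -- Y = x^2 + 2*x*y
      have hM2Z : (n : ℤ) * (n - 2 * m) = Y * 3 := by
        have := congrArg (Nat.cast : ℕ → ℤ) hM2k
        rw [hM2def] at this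
        push_cast [show 2 * m ≤ n by omega] at this
        linarith
      have hx3Z : (3 : ℤ) * x = n - 2 * m := by
        have := congrArg (Nat.cast : ℕ → ℤ) hx3
        push_cast [show 2 * m ≤ n by omega] at this
        linarith
      have hx2yZ : (x : ℤ) + 2 * y = n := by exact_mod_cast congrArg (Nat.cast : ℕ → ℤ) hx2y
      have h3 : (3 : ℤ) * Y = 3 * (x ^ 2 + 2 * x * y) := by
        linear_combination -hM2Z - (n:ℤ) * hx3Z - 3*(x:ℤ) * hx2yZ
      have : (Y : ℤ) = x ^ 2 + 2 * x * y := by linarith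
      exact_mod_cast this
    · -- Z = x^2 + x*y + y^2
      have hNZ3 : (n : ℤ) ^ 2 + m ^ 2 - m * n = Z * 3 := by
        have := congrArg (Nat.cast : ℕ → ℤ) hkN
        rw [hNdef] at this
        push_cast [hmnle] at this
        linarith
      have hx3Z : (3 : ℤ) * x = n - 2 * m := by
        have := congrArg (Nat.cast : ℕ → ℤ) hx3
        push_cast [show 2 * m ≤ n by omega] at this
        linarith
      have hy3Z : (3 : ℤ) * y = n + m := by exact_mod_cast congrArg (Nat.cast : ℕ → ℤ) hy3
      have h9 : (9 : ℤ) * Z = 9 * (x ^ 2 + x * y + y ^ 2) := by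
        linear_combination -3*hNZ3 - (3*(x:ℤ) + ((n:ℤ)-2*m)) * hx3Z - (3*(y:ℤ) + ((n:ℤ)+m)) * hy3Z - 3*(y:ℤ) * hx3Z - ((n:ℤ)-2*m) * hy3Z
      have : (Z : ℤ) = x ^ 2 + x * y + y ^ 2 := by linarith
      exact_mod_cast this
end

section
/- The equation a⁴ + a²b² + b⁴ = c² has no solutions in positive integers a, b, c. -/
lemma odd_sq_mod8 {n : ℕ} (h : n % 2 = 1) : n ^ 2 % 8 = 1 := by
  obtain ⟨k, rfl⟩ : ∃ k, n = 2 * k + 1 := ⟨n / 2, by omega⟩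
  obtain ⟨j, hj⟩ := Nat.even_mul_succ_self k
  have : (2 * k + 1) ^ 2 = 4 * (k * (k + 1)) + 1 := by ring
  omega

lemma even_sq_mod8 {n : ℕ} (h : n % 2 = 0) : n ^ 2 % 8 = 0 ∨ n ^ 2 % 8 = 4 := by
  obtain ⟨k, rfl⟩ : ∃ k, n = 2 * k := ⟨n / 2, by omega⟩
  rcases Nat.even_or_odd k with ⟨j, rfl⟩ | ⟨j, rfl⟩
  · left; have : (2 * (j + j)) ^ 2 = 8 * (2 * j ^ 2) := by ring
    omega
  · right; have : (2 * (2 * j + 1)) ^ 2 = 8 * (2 * j ^ 2 + 2 * j) + 4 := by ring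
    omega

lemma pos_of_mul_left {m n : ℕ} (h : 0 < m * n) : 0 < m := by
  rcases Nat.eq_zero_or_pos m with rfl | h'
  · simp at h
  · exact h'

lemma pos_of_mul_right {m n : ℕ} (h : 0 < m * n) : 0 < n := by
  rw [mul_comm] at h; exact pos_of_mul_left h
lemma four_split {x w M N : ℕ} (hxw : Nat.Coprime x w) (hMN : Nat.Coprime M N)
    (h : x * w = M * N) :
    ∃ r s t u : ℕ, x = r * s ∧ w = t * u ∧ M = r * t ∧ N = s * u := by
  refine ⟨Nat.gcd x M, Nat.gcd x N, Nat.gcd w M, Nat.gcd w N, ?_, ?_, ?_, ?_⟩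
  · exact ((Nat.gcd_mul_gcd_eq_iff_dvd_mul_of_coprime hMN).mpr ⟨w, h.symm⟩).symm
  · exact ((Nat.gcd_mul_gcd_eq_iff_dvd_mul_of_coprime hMN).mpr
      ⟨x, by rw [← h]; ring⟩).symm
  · rw [Nat.gcd_comm x M, Nat.gcd_comm w M]
    exact ((Nat.gcd_mul_gcd_eq_iff_dvd_mul_of_coprime hxw).mpr ⟨N, h⟩).symm
  · rw [Nat.gcd_comm x N, Nat.gcd_comm w N]
    exact ((Nat.gcd_mul_gcd_eq_iff_dvd_mul_of_coprime hxw).mpr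
      ⟨M, by rw [h]; ring⟩).symm

lemma pythag_even_leg {a b c : ℕ} (h : a ^ 2 + b ^ 2 = c ^ 2)
    (hco : Nat.Coprime a b) (hb : b % 2 = 1) (ha : 0 < a) :
    ∃ M N : ℕ, a = 2 * (M * N) ∧ c = M ^ 2 + N ^ 2 ∧ Nat.Coprime M N ∧
      M % 2 ≠ N % 2 := by
  have ht : PythagoreanTriple (a : ℤ) b c := by
    have : ((a : ℤ)) ^ 2 + (b : ℤ) ^ 2 = (c : ℤ) ^ 2 := by exact_mod_cast h
    unfold PythagoreanTriple
    nlinarith [this]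
  have hco' : Int.gcd (a : ℤ) (b : ℤ) = 1 := by
    rwa [Int.gcd_natCast_natCast]
  obtain ⟨m, n, hmn, hz, hcop, hpar⟩ :=
    PythagoreanTriple.coprime_classification.mp ⟨ht, hco'⟩
  rcases hmn with ⟨h1, h2⟩ | ⟨h1, h2⟩
  · exfalso
    have : (2 : ℤ) ∣ (b : ℤ) := ⟨m * n, by rw [h2]; ring⟩
    have : (2 : ℕ) ∣ b := by exact_mod_cast this
    omega
  · have hc : (c : ℤ) = m ^ 2 + n ^ 2 := by
      rcases hz with hz | hz
      · exact hz
      · exfalso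
        have h0 : (0 : ℤ) ≤ (c : ℤ) := Int.natCast_nonneg c
        have hm2 : m ^ 2 = 0 := le_antisymm (by nlinarith [sq_nonneg n]) (sq_nonneg m)
        have hm : m = 0 := by
          exact (pow_eq_zero_iff two_ne_zero).mp hm2
        have : (a : ℤ) = 0 := by rw [h1, hm]; ring
        have : a = 0 := by exact_mod_cast this
        omega
    have hmn_pos : 0 < m * n := by
      rcases lt_trichotomy (m * n) 0 with hlt | he | hgt
      · exfalso; have : (a : ℤ) ≤ 0 := by rw [h1]; linarith
        have : (0 : ℤ) < a := by exact_mod_cast ha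
        linarith
      · exfalso; have : (a : ℤ) = 0 := by rw [h1]; linear_combination 2 * he
        have : a = 0 := by exact_mod_cast this
        omega
      · exact hgt
    refine ⟨m.natAbs, n.natAbs, ?_, ?_, hcop, ?_⟩
    · have hmm : m * n = ((m.natAbs * n.natAbs : ℕ) : ℤ) := by
        push_cast
        rw [← abs_mul]
        exact (abs_of_nonneg hmn_pos.le).symm
      have h1' : (a : ℤ) = 2 * ((m.natAbs * n.natAbs : ℕ) : ℤ) := by
        rw [h1]; linear_combination 2 * hmm
      exact_mod_cast h1'
    · have : (c : ℤ) = ((m.natAbs ^ 2 + n.natAbs ^ 2 : ℕ) : ℤ) := by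
        push_cast
        rw [sq_abs, sq_abs]
        exact hc
      exact_mod_cast this
    · have hm2 : m.natAbs % 2 = (m % 2).natAbs := by
        omega
      have hn2 : n.natAbs % 2 = (n % 2).natAbs := by
        omega
      omega

lemma descent {x y z : ℕ} (hx : 0 < x) (hy : 0 < y) (hco : Nat.Coprime x y)
    (hxo : x % 2 = 1) (hye : y % 2 = 0)
    (heq : x ^ 4 + x ^ 2 * y ^ 2 + y ^ 4 = z ^ 2) :
    ∃ a b c : ℕ, 0 < a ∧ 0 < b ∧ 0 < c ∧ c < z ∧
      a ^ 4 + a ^ 2 * b ^ 2 + b ^ 4 = c ^ 2 := by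
  obtain ⟨w, rfl⟩ : ∃ w, y = 2 * w := ⟨y / 2, by omega⟩
  have hw : 0 < w := by omega
  -- z is big
  have hx4 : 1 ≤ x ^ 4 := Nat.one_le_pow _ _ hx
  have hzy : (2 * w) ^ 2 < z := by
    by_contra hle
    push_neg at hle
    have h2 : z ^ 2 ≤ ((2 * w) ^ 2) ^ 2 := Nat.pow_le_pow_left hle 2
    have h3 : ((2 * w) ^ 2) ^ 2 = (2 * w) ^ 4 := by ring
    omega
  have hwz : w < z := by nlinarith
  -- the key Pythagorean relation
  have key : (x * (2 * w)) ^ 2 + z ^ 2 = (x ^ 2 + (2 * w) ^ 2) ^ 2 := by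
    rw [← heq]; ring
  -- z is odd
  have hzo : z % 2 = 1 := by
    have h1 : x ^ 4 % 2 = 1 := by
      rw [Nat.pow_mod, hxo]
    have h2 : x ^ 2 * (2 * w) ^ 2 = 2 * (x ^ 2 * (2 * w ^ 2)) := by ring
    have h3 : (2 * w) ^ 4 = 2 * (8 * w ^ 4) := by ring
    have hz2 : z ^ 2 % 2 = 1 := by omega
    rcases Nat.even_or_odd z with ⟨j, rfl⟩ | ⟨j, rfl⟩
    · exfalso
      have : (j + j) ^ 2 = 2 * (2 * j ^ 2) := by ring
      omega
    · omega
  -- coprimality with z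
  have hcxz : Nat.Coprime x z := by
    have hdx : Nat.gcd x z ∣ x := Nat.gcd_dvd_left _ _
    have hdz : Nat.gcd x z ∣ z := Nat.gcd_dvd_right _ _
    have hd1 : Nat.gcd x z ∣ (2 * w) ^ 4 := by
      have ha : Nat.gcd x z ∣ x ^ 4 + x ^ 2 * (2 * w) ^ 2 :=
        dvd_add (hdx.trans (dvd_pow_self x (by norm_num)))
          ((hdx.trans (dvd_pow_self x (by norm_num))).mul_right _)
      have hb : Nat.gcd x z ∣ z ^ 2 := hdz.trans (dvd_pow_self z (by norm_num))
      have hc : (2 * w) ^ 4 = z ^ 2 - (x ^ 4 + x ^ 2 * (2 * w) ^ 2) := by omega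
      rw [hc]; exact Nat.dvd_sub hb ha
    have : Nat.gcd x z ∣ Nat.gcd x ((2 * w) ^ 4) := Nat.dvd_gcd hdx hd1
    rw [Nat.Coprime.gcd_eq_one (hco.pow_right 4)] at this
    exact Nat.dvd_one.mp this
  have hcyz : Nat.Coprime (2 * w) z := by
    have hdx : Nat.gcd (2 * w) z ∣ 2 * w := Nat.gcd_dvd_left _ _
    have hdz : Nat.gcd (2 * w) z ∣ z := Nat.gcd_dvd_right _ _
    have hd1 : Nat.gcd (2 * w) z ∣ x ^ 4 := by
      have ha : Nat.gcd (2 * w) z ∣ x ^ 2 * (2 * w) ^ 2 + (2 * w) ^ 4 :=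
        dvd_add ((hdx.trans (dvd_pow_self _ (by norm_num))).mul_left _)
          (hdx.trans (dvd_pow_self _ (by norm_num)))
      have hb : Nat.gcd (2 * w) z ∣ z ^ 2 := hdz.trans (dvd_pow_self z (by norm_num))
      have hc : x ^ 4 = z ^ 2 - (x ^ 2 * (2 * w) ^ 2 + (2 * w) ^ 4) := by omega
      rw [hc]; exact Nat.dvd_sub hb ha
    have : Nat.gcd (2 * w) z ∣ Nat.gcd (2 * w) (x ^ 4) := Nat.dvd_gcd hdx hd1
    rw [Nat.Coprime.gcd_eq_one (hco.symm.pow_right 4)] at this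
    exact Nat.dvd_one.mp this
  have hlegs : Nat.Coprime (x * (2 * w)) z := Nat.Coprime.mul hcxz hcyz
  obtain ⟨M, N, hMN1, hMN2, hMNco, hMNpar⟩ :=
    pythag_even_leg key hlegs hzo (Nat.mul_pos hx (by omega))
  -- hMN1 : x * (2*w) = 2 * (M * N), hMN2 : x^2 + (2*w)^2 = M^2 + N^2
  have hxw : x * w = M * N := by
    have h1 : x * (2 * w) = 2 * (x * w) := by ring
    omega
  -- split into four coprime factors
  have hcxw : Nat.Coprime x w :=
    Nat.Coprime.coprime_dvd_right ⟨2, by ring⟩ hco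
  obtain ⟨r, s, t, u, hxeq, hweq, hMeq, hNeq⟩ := four_split hcxw hMNco hxw
  have hr : 0 < r := pos_of_mul_left (hxeq ▸ hx)
  have hs : 0 < s := pos_of_mul_right (hxeq ▸ hx)
  have ht : 0 < t := pos_of_mul_left (hweq ▸ hw)
  have hu : 0 < u := pos_of_mul_right (hweq ▸ hw)
  have hrx : r ∣ x := ⟨s, hxeq⟩
  have hsx : s ∣ x := ⟨r, by rw [hxeq]; ring⟩
  have htw : t ∣ w := ⟨u, hweq⟩
  have huw : u ∣ w := ⟨t, by rw [hweq]; ring⟩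
  have hru : Nat.Coprime r u :=
    Nat.Coprime.coprime_dvd_left hrx (Nat.Coprime.coprime_dvd_right huw hcxw)
  have hst : Nat.Coprime s t :=
    Nat.Coprime.coprime_dvd_left hsx (Nat.Coprime.coprime_dvd_right htw hcxw)
  have htr : Nat.Coprime t r :=
    Nat.Coprime.coprime_dvd_left htw (Nat.Coprime.coprime_dvd_right hrx hcxw.symm)
  have hus : Nat.Coprime u s :=
    Nat.Coprime.coprime_dvd_left huw (Nat.Coprime.coprime_dvd_right hsx hcxw.symm)
  -- parities
  have hro : r % 2 = 1 := by
    rcases Nat.even_or_odd r with ⟨j, hj⟩ | ⟨j, hj⟩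
    · exfalso
      obtain ⟨c, hc⟩ := hrx
      have : x = 2 * (j * c) := by rw [hc, hj]; ring
      omega
    · omega
  have hso : s % 2 = 1 := by
    rcases Nat.even_or_odd s with ⟨j, hj⟩ | ⟨j, hj⟩
    · exfalso
      obtain ⟨c, hc⟩ := hsx
      have : x = 2 * (j * c) := by rw [hc, hj]; ring
      omega
    · omega
  have htu : t % 2 ≠ u % 2 := by
    have h1 := Nat.mul_mod r t 2
    have h2 := Nat.mul_mod s u 2
    rw [← hMeq, hro] at h1
    rw [← hNeq, hso] at h2
    omega
  -- the central integer identity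
  have hsum : (r * s) ^ 2 + (2 * (t * u)) ^ 2 = (r * t) ^ 2 + (s * u) ^ 2 := by
    rw [← hxeq, ← hweq, ← hMeq, ← hNeq]; exact hMN2
  have hZ : (r : ℤ) ^ 2 * ((s : ℤ) ^ 2 - (t : ℤ) ^ 2)
      = (u : ℤ) ^ 2 * ((s : ℤ) ^ 2 - 4 * (t : ℤ) ^ 2) := by
    zify at hsum
    linear_combination hsum
  have hu0 : ((u : ℤ)) ^ 2 ≠ 0 := by positivity
  have hcop_ur : IsCoprime ((u : ℤ) ^ 2) ((r : ℤ) ^ 2) := by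
    apply IsCoprime.pow
    rw [Int.isCoprime_iff_gcd_eq_one, Int.gcd_natCast_natCast]
    exact hru.symm
  have hmul : (u : ℤ) ^ 2 ∣ (r : ℤ) ^ 2 * ((s : ℤ) ^ 2 - (t : ℤ) ^ 2) :=
    ⟨(s : ℤ) ^ 2 - 4 * (t : ℤ) ^ 2, by linear_combination hZ⟩
  have hdvd : (u : ℤ) ^ 2 ∣ (s : ℤ) ^ 2 - (t : ℤ) ^ 2 :=
    hcop_ur.dvd_of_dvd_mul_left hmul
  obtain ⟨k, hk⟩ := hdvd
  have hk2 : (s : ℤ) ^ 2 - 4 * (t : ℤ) ^ 2 = (r : ℤ) ^ 2 * k := by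
    apply mul_left_cancel₀ hu0
    linear_combination (-1 : ℤ) * hZ + (r : ℤ) ^ 2 * hk
  have hk3 : k ∣ 3 := by
    have hcop_st : IsCoprime ((s : ℤ) ^ 2) ((t : ℤ) ^ 2) := by
      apply IsCoprime.pow
      rw [Int.isCoprime_iff_gcd_eq_one, Int.gcd_natCast_natCast]
      exact hst
    obtain ⟨α, β, hαβ⟩ := hcop_st
    have d1 : k ∣ 3 * (t : ℤ) ^ 2 := ⟨(u : ℤ) ^ 2 - (r : ℤ) ^ 2, by
      linear_combination hk - hk2⟩
    have d2 : k ∣ 3 * (s : ℤ) ^ 2 := ⟨4 * (u : ℤ) ^ 2 - (r : ℤ) ^ 2, by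
      linear_combination 4 * hk - hk2⟩
    have h3 : (3 : ℤ) = α * (3 * (s : ℤ) ^ 2) + β * (3 * (t : ℤ) ^ 2) := by
      linear_combination -3 * hαβ
    rw [h3]
    exact dvd_add (d2.mul_left α) (d1.mul_left β)
  have hk4 : k = 1 ∨ k = -1 ∨ k = 3 ∨ k = -3 := by
    have h1 := Int.natAbs_dvd_natAbs.mpr hk3
    have h2 : k.natAbs ∣ 3 := by simpa using h1
    have h3 := (Nat.prime_three).eq_one_or_self_of_dvd k.natAbs h2
    omega
  have hs8 := odd_sq_mod8 hso
  have hr8 := odd_sq_mod8 hro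
  rcases hk4 with rfl | rfl | rfl | rfl
  · -- k = 1 : descent via the triple (2t, r, s)
    have e1 : t ^ 2 + u ^ 2 = s ^ 2 := by
      have hh : ((t : ℤ)) ^ 2 + (u : ℤ) ^ 2 = (s : ℤ) ^ 2 := by linear_combination -hk
      exact_mod_cast hh
    have e2 : (2 * t) ^ 2 + r ^ 2 = s ^ 2 := by
      have hh : ((2 * t : ℕ) : ℤ) ^ 2 + (r : ℤ) ^ 2 = (s : ℤ) ^ 2 := by
        push_cast; linear_combination -hk2
      exact_mod_cast hh
    have hc2tr : Nat.Coprime (2 * t) r :=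
      Nat.Coprime.mul (Nat.coprime_two_left.mpr (Nat.odd_iff.mpr hro)) htr
    obtain ⟨P, Q, hPQ1, hPQ2, _, _⟩ := pythag_even_leg e2 hc2tr hro (by omega)
    have hPQt : t = P * Q := by omega
    refine ⟨P, Q, u, pos_of_mul_left (hPQt ▸ ht), pos_of_mul_right (hPQt ▸ ht),
      hu, ?_, ?_⟩
    · have : u ≤ t * u := Nat.le_mul_of_pos_left u ht
      rw [← hweq] at this
      omega
    · have hid : P ^ 4 + P ^ 2 * Q ^ 2 + Q ^ 4 + (P * Q) ^ 2 = (P ^ 2 + Q ^ 2) ^ 2 := by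
        ring
      rw [← hPQt, ← hPQ2] at hid
      omega
  · -- k = -1 : impossible by parity
    exfalso
    have e1 : s ^ 2 + u ^ 2 = t ^ 2 := by
      have hh : (s : ℤ) ^ 2 + (u : ℤ) ^ 2 = (t : ℤ) ^ 2 := by linear_combination hk
      exact_mod_cast hh
    have e2 : s ^ 2 + r ^ 2 = 4 * t ^ 2 := by
      have hh : (s : ℤ) ^ 2 + (r : ℤ) ^ 2 = 4 * (t : ℤ) ^ 2 := by linear_combination hk2
      exact_mod_cast hh
    rcases Nat.even_or_odd t with hte | hto
    · have ht0 : t % 2 = 0 := Nat.even_iff.mp hte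
      have hu1 : u % 2 = 1 := by omega
      have h1 := odd_sq_mod8 hu1
      have h2 := even_sq_mod8 ht0
      omega
    · have ht1 : t % 2 = 1 := Nat.odd_iff.mp hto
      have h1 := odd_sq_mod8 ht1
      omega
  · -- k = 3 : impossible by parity
    exfalso
    have e1 : s ^ 2 = t ^ 2 + 3 * u ^ 2 := by
      have hh : (s : ℤ) ^ 2 = (t : ℤ) ^ 2 + 3 * (u : ℤ) ^ 2 := by linear_combination hk
      exact_mod_cast hh
    have e2 : s ^ 2 = 4 * t ^ 2 + 3 * r ^ 2 := by
      have hh : (s : ℤ) ^ 2 = 4 * (t : ℤ) ^ 2 + 3 * (r : ℤ) ^ 2 := by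
        linear_combination hk2
      exact_mod_cast hh
    rcases Nat.even_or_odd t with hte | hto
    · have ht0 : t % 2 = 0 := Nat.even_iff.mp hte
      have hu1 : u % 2 = 1 := by omega
      have h1 := odd_sq_mod8 hu1
      have h2 := even_sq_mod8 ht0
      omega
    · have ht1 : t % 2 = 1 := Nat.odd_iff.mp hto
      have h1 := odd_sq_mod8 ht1
      omega
  · -- k = -3
    have e1 : t ^ 2 = s ^ 2 + 3 * u ^ 2 := by
      have hh : (t : ℤ) ^ 2 = (s : ℤ) ^ 2 + 3 * (u : ℤ) ^ 2 := by linear_combination -hk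
      exact_mod_cast hh
    have e2 : 4 * t ^ 2 = s ^ 2 + 3 * r ^ 2 := by
      have hh : 4 * (t : ℤ) ^ 2 = (s : ℤ) ^ 2 + 3 * (r : ℤ) ^ 2 := by
        linear_combination -hk2
      exact_mod_cast hh
    rcases Nat.even_or_odd t with hte | hto
    · -- t even, u odd : impossible mod 8
      exfalso
      have ht0 : t % 2 = 0 := Nat.even_iff.mp hte
      have hu1 : u % 2 = 1 := by omega
      have h1 := odd_sq_mod8 hu1
      have h2 := even_sq_mod8 ht0
      omega
    · -- t odd, u even : descent via the triple (2u, s, r)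
      have e3 : t ^ 2 + u ^ 2 = r ^ 2 := by omega
      have e4 : (2 * u) ^ 2 + s ^ 2 = r ^ 2 := by
        have h4u : (2 * u) ^ 2 = 4 * u ^ 2 := by ring
        omega
      have hc2us : Nat.Coprime (2 * u) s :=
        Nat.Coprime.mul (Nat.coprime_two_left.mpr (Nat.odd_iff.mpr hso)) hus
      obtain ⟨P, Q, hPQ1, hPQ2, _, _⟩ := pythag_even_leg e4 hc2us hso (by omega)
      have hPQu : u = P * Q := by omega
      refine ⟨P, Q, t, pos_of_mul_left (hPQu ▸ hu), pos_of_mul_right (hPQu ▸ hu),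
        ht, ?_, ?_⟩
      · have : t ≤ t * u := Nat.le_mul_of_pos_right t hu
        rw [← hweq] at this
        omega
      · have hid : P ^ 4 + P ^ 2 * Q ^ 2 + Q ^ 4 + (P * Q) ^ 2
            = (P ^ 2 + Q ^ 2) ^ 2 := by ring
        rw [← hPQu, ← hPQ2] at hid
        omega

lemma no_sol_aux : ∀ c a b : ℕ, 0 < a → 0 < b →
    a ^ 4 + a ^ 2 * b ^ 2 + b ^ 4 = c ^ 2 → False := by
  intro c
  induction c using Nat.strong_induction_on with
  | _ c ih =>
    intro a b ha hb heq
    by_cases hg : Nat.Coprime a b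
    · have hsym : b ^ 4 + b ^ 2 * a ^ 2 + a ^ 4 = c ^ 2 := by rw [← heq]; ring
      rcases Nat.even_or_odd a with hae | hao
      · rcases Nat.even_or_odd b with hbe | hbo
        · -- both even : contradicts coprimality
          have h2a : 2 ∣ a := by obtain ⟨i, hi⟩ := hae; exact ⟨i, by omega⟩
          have h2b : 2 ∣ b := by obtain ⟨i, hi⟩ := hbe; exact ⟨i, by omega⟩
          have h2g : 2 ∣ Nat.gcd a b := Nat.dvd_gcd h2a h2b
          have := Nat.Coprime.gcd_eq_one hg
          omega
        · obtain ⟨a', b', c', h1, h2, h3, hlt, heq'⟩ :=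
            descent hb ha hg.symm (Nat.odd_iff.mp hbo) (Nat.even_iff.mp hae) hsym
          exact ih c' hlt a' b' h1 h2 heq'
      · rcases Nat.even_or_odd b with hbe | hbo
        · obtain ⟨a', b', c', h1, h2, h3, hlt, heq'⟩ :=
            descent ha hb hg (Nat.odd_iff.mp hao) (Nat.even_iff.mp hbe) heq
          exact ih c' hlt a' b' h1 h2 heq'
        · -- both odd : impossible mod 8
          have hao' := Nat.odd_iff.mp hao
          have hbo' := Nat.odd_iff.mp hbo
          have h1 := odd_sq_mod8 hao'
          have h2 := odd_sq_mod8 hbo'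
          have h3 : a ^ 4 = (a ^ 2) ^ 2 := by ring
          have h4 : b ^ 4 = (b ^ 2) ^ 2 := by ring
          have h5 : a ^ 2 * b ^ 2 = (a * b) ^ 2 := by ring
          have h6 := odd_sq_mod8 (show a ^ 2 % 2 = 1 by omega)
          have h7 := odd_sq_mod8 (show b ^ 2 % 2 = 1 by omega)
          have hab : (a * b) % 2 = 1 := by
            have := Nat.mul_mod a b 2
            rw [hao', hbo'] at this
            omega
          have h8 := odd_sq_mod8 hab
          rcases Nat.even_or_odd c with hce | hco2
          · have := even_sq_mod8 (Nat.even_iff.mp hce)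
            omega
          · have := odd_sq_mod8 (Nat.odd_iff.mp hco2)
            omega
    · -- non-coprime : divide out the gcd
      have hg1 : 0 < Nat.gcd a b := Nat.gcd_pos_of_pos_left _ ha
      have hg2 : 2 ≤ Nat.gcd a b := by
        rw [Nat.Coprime] at hg
        omega
      obtain ⟨g, hgdef⟩ : ∃ g, g = Nat.gcd a b := ⟨_, rfl⟩
      rw [← hgdef] at hg1 hg2
      obtain ⟨a', ha'⟩ : g ∣ a := by rw [hgdef]; exact Nat.gcd_dvd_left a b
      obtain ⟨b', hb'⟩ : g ∣ b := by rw [hgdef]; exact Nat.gcd_dvd_right a b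
      have heq2 : c ^ 2 = g ^ 4 * (a' ^ 4 + a' ^ 2 * b' ^ 2 + b' ^ 4) := by
        rw [← heq, ha', hb']; ring
      have hdvd : (g ^ 2) ^ 2 ∣ c ^ 2 :=
        ⟨a' ^ 4 + a' ^ 2 * b' ^ 2 + b' ^ 4, by rw [heq2]; ring⟩
      have hdc : g ^ 2 ∣ c := (Nat.pow_dvd_pow_iff two_ne_zero).mp hdvd
      obtain ⟨c', hc'⟩ := hdc
      have h4pos : 0 < g ^ 4 := by positivity
      have heq3 : a' ^ 4 + a' ^ 2 * b' ^ 2 + b' ^ 4 = c' ^ 2 := by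
        apply Nat.eq_of_mul_eq_mul_left h4pos
        rw [← heq2, hc']; ring
      have ha'pos : 0 < a' := pos_of_mul_right (ha' ▸ ha)
      have hb'pos : 0 < b' := pos_of_mul_right (hb' ▸ hb)
      have hc'pos : 0 < c' := by
        rcases Nat.eq_zero_or_pos c' with rfl | h
        · exfalso
          have h14 : 1 ≤ a' ^ 4 := Nat.one_le_pow _ _ ha'pos
          omega
        · exact h
      have hc'lt : c' < c := by
        have hgsq : 4 ≤ g ^ 2 := by nlinarith
        nlinarith
      exact ih c' hc'lt a' b' ha'pos hb'pos heq3

theorem no_sol_quartic :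
    ¬ ∃ a b c : ℕ, 0 < a ∧ 0 < b ∧ 0 < c ∧
      a ^ 4 + a ^ 2 * b ^ 2 + b ^ 4 = c ^ 2 := by
  rintro ⟨a, b, c, ha, hb, hc, heq⟩
  exact no_sol_aux c a b ha hb heq
end

section
/- There are no positive integers a, b, c, p with a² + ab + b² = p² and a² − ab + b² = c² simultaneously. -/
set_option maxHeartbeats 1000000

lemma odd8 (x : ℤ) (h : Odd x) : ∃ k, x^2 = 8*k+1 := by
  obtain ⟨y, rfl⟩ := h
  obtain ⟨m, hm⟩ := Int.even_mul_succ_self y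
  exact ⟨m, by nlinarith [hm]⟩

lemma coprime_of_no_prime (s t : ℤ)
    (H : ∀ q : ℕ, q.Prime → (q:ℤ) ∣ s → (q:ℤ) ∣ t → False) : IsCoprime s t := by
  rw [Int.isCoprime_iff_gcd_eq_one]
  by_contra hg
  obtain ⟨q, hq, hqd⟩ := Nat.exists_prime_and_dvd hg
  exact H q hq ((Int.natCast_dvd_natCast.mpr hqd).trans (Int.gcd_dvd_left _ _))
    ((Int.natCast_dvd_natCast.mpr hqd).trans (Int.gcd_dvd_right _ _))

lemma natsplit (A B S T : ℕ) (h : A*B = S*T) (hAB : Nat.Coprime A B) (hST : Nat.Coprime S T)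
    (hA : 0 < A) (hB : 0 < B) (hS : 0 < S) :
    ∃ d e f g, 0 < d ∧ 0 < e ∧ 0 < f ∧ 0 < g ∧ A = d*e ∧ B = f*g ∧ S = d*f ∧ T = e*g ∧
      Nat.Coprime d e ∧ Nat.Coprime d f ∧ Nat.Coprime d g ∧ Nat.Coprime e f ∧
      Nat.Coprime e g ∧ Nat.Coprime f g := by
  set d := Nat.gcd A S with hd
  have hd0 : 0 < d := Nat.gcd_pos_of_pos_left S hA
  set e := A / d with he
  set f := S / d with hf
  have hA' : A = d * e := (Nat.mul_div_cancel' (Nat.gcd_dvd_left A S)).symm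
  have hS' : S = d * f := (Nat.mul_div_cancel' (Nat.gcd_dvd_right A S)).symm
  have hef : Nat.Coprime e f := Nat.coprime_div_gcd_div_gcd hd0
  have h2 : e * B = f * T := by
    have h3 : d * (e * B) = d * (f * T) := by
      rw [← mul_assoc, ← hA', ← mul_assoc, ← hS', h]
    exact Nat.eq_of_mul_eq_mul_left hd0 h3
  have hfB : f ∣ B := hef.symm.dvd_of_dvd_mul_right ⟨T, by rw [mul_comm B e]; exact h2⟩
  obtain ⟨g, hg⟩ := hfB
  have hf0 : 0 < f := by
    rcases Nat.eq_zero_or_pos f with h0 | h0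
    · rw [h0, mul_zero] at hS'; omega
    · exact h0
  have he0 : 0 < e := by
    rcases Nat.eq_zero_or_pos e with h0 | h0
    · rw [h0, mul_zero] at hA'; omega
    · exact h0
  have hg0 : 0 < g := by
    rcases Nat.eq_zero_or_pos g with h0 | h0
    · rw [h0, mul_zero] at hg; omega
    · exact h0
  have hT : T = e * g := by
    have h4 : f * (e * g) = f * T := by
      have : e * (f * g) = f * T := by rw [← hg]; exact h2
      linarith [this, Nat.mul_comm e (f*g)]
    exact (Nat.eq_of_mul_eq_mul_left hf0 h4).symm
  have hdA : d ∣ A := ⟨e, hA'⟩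
  have hdS : d ∣ S := ⟨f, hS'⟩
  have heA : e ∣ A := ⟨d, by rw [hA', mul_comm]⟩
  have hfB' : f ∣ B := ⟨g, hg⟩
  have hgB : g ∣ B := ⟨f, by rw [hg, mul_comm]⟩
  have heT : e ∣ T := ⟨g, hT⟩
  have hgT : g ∣ T := ⟨e, by rw [hT, mul_comm]⟩
  have hfS : f ∣ S := ⟨d, by rw [hS', mul_comm]⟩
  exact ⟨d, e, f, g, hd0, he0, hf0, hg0, hA', hg, hS', hT,
    (hST.coprime_dvd_left hdS).coprime_dvd_right heT,
    (hAB.coprime_dvd_left hdA).coprime_dvd_right hfB',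
    (hAB.coprime_dvd_left hdA).coprime_dvd_right hgB,
    (hAB.coprime_dvd_left heA).coprime_dvd_right hfB',
    (hAB.coprime_dvd_left heA).coprime_dvd_right hgB,
    (hST.coprime_dvd_left hfS).coprime_dvd_right hgT⟩

lemma ltp (q p : ℤ) (h1 : 0 < q) (h2 : 2 ≤ p) (h3 : q^2 ≤ p) : q < p := by nlinarith

lemma kill1 (D E G : ℤ) (hoD : Odd D) (hoE : Odd E) (h : D^2 = 3*E^2 + 4*G^2) : False := by
  obtain ⟨kd, hkd⟩ := odd8 D hoD
  obtain ⟨ke, hke⟩ := odd8 E hoE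
  rcases Int.even_or_odd G with hG | hG
  · obtain ⟨G0, hG0⟩ := hG
    have key : 8*kd+1 = 24*ke+3+16*G0^2 := by
      linear_combination -hkd + 3*hke + h + 4*(G+2*G0)*(by linarith [hG0] : G - 2*G0 = 0)
    obtain ⟨w, hw⟩ : ∃ w, G0^2 = w := ⟨_, rfl⟩
    rw [hw] at key; omega
  · obtain ⟨kg, hkg⟩ := odd8 G hG
    have key : 8*kd+1 = 24*ke+3+4*(8*kg+1) := by
      linear_combination -hkd + 3*hke + h + 4*hkg
    omega

lemma kill2 (D E G : ℤ) (hoD : Odd D) (hoE : Odd E) (hoG : Odd G)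
    (h : E^2 = D^2 - 4*G^2) : False := by
  obtain ⟨kd, hkd⟩ := odd8 D hoD
  obtain ⟨ke, hke⟩ := odd8 E hoE
  obtain ⟨kg, hkg⟩ := odd8 G hoG
  have key : 8*ke+1 = 8*kd+1-4*(8*kg+1) := by
    linear_combination -hke + hkd - 4*hkg + h
  omega

lemma kill3 (D E F G : ℤ) (hoD : Odd D) (hoE : Odd E) (hoF : Odd F)
    (h1 : E^2 = F^2 + G^2) (h2 : D^2 = G^2 - 3*F^2) : False := by
  obtain ⟨kd, hkd⟩ := odd8 D hoD
  obtain ⟨ke, hke⟩ := odd8 E hoE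
  obtain ⟨kf, hkf⟩ := odd8 F hoF
  rcases Int.even_or_odd G with hG | hG
  · obtain ⟨G0, hG0⟩ := hG
    have key1 : 4*G0^2 = 8*ke - 8*kf := by
      linear_combination -(G+2*G0)*(by linarith [hG0] : G - 2*G0 = 0) + hke - hkf - h1
    have key2 : 8*kd+1 = 4*G0^2 - 24*kf - 3 := by
      linear_combination -hkd + (G+2*G0)*(by linarith [hG0] : G - 2*G0 = 0) - 3*hkf + h2
    obtain ⟨w, hw⟩ : ∃ w, G0^2 = w := ⟨_, rfl⟩
    rw [hw] at key1 key2; omega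
  · obtain ⟨kg, hkg⟩ := odd8 G hG
    have key : 8*kg+1 = 8*ke - 8*kf := by
      linear_combination -hkg + hke - hkf - h1
    omega

lemma W2desc (X Y Z V : ℤ) (hX : 0 < X) (hY : 0 < Y) (hZ : 0 < Z) (hV : V ≠ 0)
    (hco : IsCoprime X Y) (hoX : Odd X) (heY : Even Y)
    (h1 : X^2 + Y^2 = Z^2) (h2 : X^2 - 3*Y^2 = V^2) :
    ∃ a b c p : ℤ, 0 < a ∧ 0 < b ∧ 0 < c ∧ 0 < p ∧
      a^2 + a*b + b^2 = p^2 ∧ a^2 - a*b + b^2 = c^2 ∧ p^2 = Z + Y := by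
  have hoZ : Odd Z := by
    have : Odd (Z^2) := by
      rw [← h1]
      rcases hoX with ⟨x0, hx0⟩; rcases heY with ⟨y0, hy0⟩
      exact ⟨2*x0^2+2*x0+2*y0^2, by subst hx0 hy0; ring⟩
    simpa [Int.odd_pow] using this
  have hpt : PythagoreanTriple X Y Z := by
    unfold PythagoreanTriple; linear_combination h1
  have hgcd : Int.gcd X Y = 1 := Int.isCoprime_iff_gcd_eq_one.mp hco
  obtain ⟨m, n, hmn1, hmn2, hmn3, hmn4⟩ :=
    (PythagoreanTriple.coprime_classification).mp ⟨hpt, hgcd⟩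
  rcases hmn1 with ⟨hXmn, hYmn⟩ | ⟨hXmn, hYmn⟩
  swap
  · exact absurd hoX (by simp [hXmn, Int.not_odd_iff_even.mpr, parity_simps])
  have hZmn : Z = m^2 + n^2 := by
    rcases hmn2 with h | h
    · exact h
    · exfalso; nlinarith
  have hprod : (Z - 2*Y) * (Z + 2*Y) = V^2 := by linear_combination h2 - h1
  have hZ2Ypos : 0 < Z + 2*Y := by linarith
  have hVsq : 0 < V^2 := by positivity
  have hZm2Ypos : 0 < Z - 2*Y := by nlinarith
  have hcop2 : IsCoprime (Z - 2*Y) (Z + 2*Y) := by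
    apply coprime_of_no_prime
    intro q hq hq1 hq2
    have hqZ2 : (q:ℤ) ∣ 2*Z := by
      have h := dvd_add hq1 hq2; rw [show (2:ℤ)*Z = Z - 2*Y + (Z + 2*Y) by ring]; exact h
    have hqY4 : (q:ℤ) ∣ 4*Y := by
      have h := dvd_sub hq2 hq1; rw [show (4:ℤ)*Y = Z + 2*Y - (Z - 2*Y) by ring]; exact h
    have hq2' : q ≠ 2 := by
      rintro rfl
      obtain ⟨w, hw⟩ := hq1
      rcases hoZ with ⟨z0, hz0⟩
      omega
    have hqint : Prime (q:ℤ) := Nat.prime_iff_prime_int.mp hq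
    have hqn2 : ¬ ((q:ℤ) ∣ 2) := by
      intro h
      have h' : q ∣ 2 := Int.ofNat_dvd.mp (by exact_mod_cast h)
      exact hq2' ((Nat.prime_dvd_prime_iff_eq hq Nat.prime_two).mp h')
    have hqZ : (q:ℤ) ∣ Z := ((hqint.dvd_mul).mp hqZ2).resolve_left hqn2
    have hqY : (q:ℤ) ∣ Y := by
      rw [show (4:ℤ)*Y = 2*(2*Y) by ring] at hqY4
      have h := ((hqint.dvd_mul).mp hqY4).resolve_left hqn2
      exact ((hqint.dvd_mul).mp h).resolve_left hqn2
    have hqX : (q:ℤ) ∣ X := by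
      have hx2 : X^2 = Z^2 - Y^2 := by linear_combination h1
      have hdd : (q:ℤ) ∣ X^2 := by
        rw [hx2]; exact dvd_sub (dvd_pow hqZ two_ne_zero) (dvd_pow hqY two_ne_zero)
      exact hqint.dvd_of_dvd_pow hdd
    exact hqint.not_isUnit (hco.isUnit_of_dvd' hqX hqY)
  -- extract squares
  obtain ⟨v1, hv1⟩ := Int.sq_of_isCoprime hcop2 hprod
  obtain ⟨v2, hv2⟩ := Int.sq_of_isCoprime hcop2.symm (by linear_combination hprod : (Z + 2*Y) * (Z - 2*Y) = V^2)
  have hv1' : Z - 2*Y = |v1|^2 := by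
    rcases hv1 with h | h
    · rw [sq_abs]; exact h
    · exfalso; nlinarith [sq_nonneg v1]
  have hv2' : Z + 2*Y = |v2|^2 := by
    rcases hv2 with h | h
    · rw [sq_abs]; exact h
    · exfalso; nlinarith [sq_nonneg v2]
  set w1 := |v1| with hw1
  set w2 := |v2| with hw2
  have hw1n : 0 ≤ w1 := abs_nonneg v1
  have hw2n : 0 ≤ w2 := abs_nonneg v2
  have hw1o : Odd w1 := by
    rcases Int.even_or_odd w1 with h | h
    · exfalso
      rcases h with ⟨u, hu⟩
      rcases hoZ with ⟨z0, hz0⟩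
      rcases heY with ⟨y0, hy0⟩
      have : Z - 2*Y = (u+u)^2 := by rw [← hu]; exact hv1'
      have h4 : (4:ℤ) ∣ Z - 2*Y := ⟨u^2, by rw [this]; ring⟩
      omega
    · exact h
  have hw2o : Odd w2 := by
    rcases Int.even_or_odd w2 with h | h
    · exfalso
      rcases h with ⟨u, hu⟩
      rcases hoZ with ⟨z0, hz0⟩
      rcases heY with ⟨y0, hy0⟩
      have : Z + 2*Y = (u+u)^2 := by rw [← hu]; exact hv2'
      have h4 : (4:ℤ) ∣ Z + 2*Y := ⟨u^2, by rw [this]; ring⟩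
      omega
    · exact h
  have hlt : w1 < w2 := by nlinarith
  -- define new solution
  obtain ⟨x0, hx0⟩ : Even (w2 + w1) := hw2o.add_odd hw1o
  obtain ⟨y0, hy0⟩ : Even (w2 - w1) := hw2o.sub_odd hw1o
  have hx0eq : w2 + w1 = 2*x0 := by omega
  have hy0eq : w2 - w1 = 2*y0 := by omega
  have hw1pos : 0 < w1 := by
    rcases eq_or_lt_of_le hw1n with h | h
    · exfalso; rw [← h] at hv1'; simp at hv1'; omega
    · exact h
  have hx0pos : 0 < x0 := by omega
  have hy0pos : 0 < y0 := by omega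
  have hmn0 : m - n ≠ 0 := by
    intro h
    have hmm : m = n := by omega
    have hX0 : X = 0 := by rw [hXmn, hmm]; ring
    omega
  have hmn0' : m + n ≠ 0 := by
    intro h
    have hmm : m = -n := by omega
    have hX0 : X = 0 := by rw [hXmn, hmm]; ring
    omega
  refine ⟨x0, y0, |m - n|, |m + n|, hx0pos, hy0pos, abs_pos.mpr hmn0, abs_pos.mpr hmn0', ?_, ?_, ?_⟩
  · have h4 : 4*(x0^2 + x0*y0 + y0^2) = 4*(|m+n|^2) := by
      rw [sq_abs]
      have e1 : Z - 2*Y = (x0 - y0)^2 := by rw [hv1']; congr 1; omega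
      have e2 : Z + 2*Y = (x0 + y0)^2 := by rw [hv2']; congr 1; omega
      linear_combination -e1 - 3*e2 + 4*hZmn + 4*hYmn
    have := mul_left_cancel₀ (by norm_num : (4:ℤ) ≠ 0) h4
    linarith [this]
  · have h4 : 4*(x0^2 - x0*y0 + y0^2) = 4*(|m-n|^2) := by
      rw [sq_abs]
      have e1 : Z - 2*Y = (x0 - y0)^2 := by rw [hv1']; congr 1; omega
      have e2 : Z + 2*Y = (x0 + y0)^2 := by rw [hv2']; congr 1; omega
      linear_combination -3*e1 - e2 + 4*hZmn - 4*hYmn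
    have := mul_left_cancel₀ (by norm_num : (4:ℤ) ≠ 0) h4
    linarith [this]
  · rw [sq_abs]; linear_combination -hZmn - hYmn

lemma descent_core (a b c p : ℤ) (ha : 0 < a) (hb : 0 < b) (hc : 0 < c) (hp : 0 < p)
    (hcop : IsCoprime a b) (hoa : Odd a) (heb : Even b)
    (e1 : a^2 + a*b + b^2 = p^2) (e2 : a^2 - a*b + b^2 = c^2) :
    ∃ a' b' c' p' : ℤ, 0 < a' ∧ 0 < b' ∧ 0 < c' ∧ 0 < p' ∧
      a'^2 + a'*b' + b'^2 = p'^2 ∧ a'^2 - a'*b' + b'^2 = c'^2 ∧ p' < p := by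
  obtain ⟨B, hbB⟩ : ∃ B, b = 2*B := by rcases heb with ⟨B, h⟩; exact ⟨B, by omega⟩
  have hB : 0 < B := by omega
  obtain ⟨a0, ha0⟩ := hoa
  have hop : Odd p := by
    have h2 : Odd (p^2) := ⟨2*a0^2+2*a0+2*a0*B+B+2*B^2, by rw [← e1, ha0, hbB]; ring⟩
    simpa [Int.odd_pow] using h2
  have hoc : Odd c := by
    have h2 : Odd (c^2) := ⟨2*a0^2+2*a0-2*a0*B-B+2*B^2, by rw [← e2, ha0, hbB]; ring⟩
    simpa [Int.odd_pow] using h2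
  have hpc : c < p := by nlinarith
  have hp2 : 2 ≤ p := by nlinarith [mul_pos ha hb]
  obtain ⟨s, hs⟩ : Even (p + c) := hop.add_odd hoc
  obtain ⟨t, ht⟩ : Even (p - c) := hop.sub_odd hoc
  have hs2 : p + c = 2*s := by omega
  have ht2 : p - c = 2*t := by omega
  have hspos : 0 < s := by omega
  have htpos : 0 < t := by omega
  have hpst : p = s + t := by omega
  have hcst : c = s - t := by omega
  have hstab : s*t = a*B := by
    have h4 : 4*(s*t) = 4*(a*B) := by
      linear_combination -(p+s+t)*hpst + (c+s-t)*hcst + e2 - e1 + 2*a*hbB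
    exact mul_left_cancel₀ (by norm_num : (4:ℤ) ≠ 0) h4
  have hsum : s^2 + t^2 = a^2 + 4*B^2 := by
    have h4 : 4*(s^2+t^2) = 4*(a^2+4*B^2) := by
      linear_combination -2*(p+s+t)*hpst - 2*(c+s-t)*hcst - 2*e1 - 2*e2 + 4*(b+2*B)*hbB
    exact mul_left_cancel₀ (by norm_num : (4:ℤ) ≠ 0) h4
  have hcopaB : IsCoprime a B := by
    rw [hbB] at hcop; exact hcop.of_mul_right_right
  have hcopst : IsCoprime s t := by
    apply coprime_of_no_prime
    intro q hq hq1 hq2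
    have hqint : Prime (q:ℤ) := Nat.prime_iff_prime_int.mp hq
    have hq2' : q ≠ 2 := by
      rintro rfl
      have : (2:ℤ) ∣ p := by rw [hpst]; exact dvd_add hq1 hq2
      rcases hop with ⟨p0, hp0⟩; omega
    have hqn2 : ¬ ((q:ℤ) ∣ 2) := by
      intro h
      have h' : q ∣ 2 := Int.ofNat_dvd.mp (by exact_mod_cast h)
      exact hq2' ((Nat.prime_dvd_prime_iff_eq hq Nat.prime_two).mp h')
    have hqab : (q:ℤ) ∣ a*B := by rw [← hstab]; exact Dvd.dvd.mul_right hq1 t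
    have hqsum : (q:ℤ) ∣ a^2 + 4*B^2 := by
      rw [← hsum]; exact dvd_add (dvd_pow hq1 two_ne_zero) (dvd_pow hq2 two_ne_zero)
    rcases (hqint.dvd_mul).mp hqab with hA | hB'
    · have hq4B : (q:ℤ) ∣ 2*(2*B^2) := by
        have h := dvd_sub hqsum (dvd_pow hA two_ne_zero)
        rwa [show a^2+4*B^2-a^2 = 2*(2*B^2) from by ring] at h
      have h1 := ((hqint.dvd_mul).mp hq4B).resolve_left hqn2
      have h2 := ((hqint.dvd_mul).mp h1).resolve_left hqn2
      exact hqint.not_unit (hcopaB.isUnit_of_dvd' hA (hqint.dvd_of_dvd_pow h2))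
    · have hqa2 : (q:ℤ) ∣ a^2 := by
        have h := dvd_sub hqsum (Dvd.dvd.mul_left (dvd_pow hB' two_ne_zero) 4)
        rwa [show a^2+4*B^2-4*B^2 = a^2 from by ring] at h
      exact hqint.not_unit (hcopaB.isUnit_of_dvd' (hqint.dvd_of_dvd_pow hqa2) hB')
  -- convert to ℕ and split
  have haN : ((a.natAbs : ℤ)) = a := Int.natAbs_of_nonneg ha.le
  have hBN : ((B.natAbs : ℤ)) = B := Int.natAbs_of_nonneg hB.le
  have hsN : ((s.natAbs : ℤ)) = s := Int.natAbs_of_nonneg hspos.le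
  have htN : ((t.natAbs : ℤ)) = t := Int.natAbs_of_nonneg htpos.le
  have hmulN : a.natAbs * B.natAbs = s.natAbs * t.natAbs := by
    rw [← Int.natAbs_mul, ← Int.natAbs_mul, hstab]
  have hcopN : Nat.Coprime a.natAbs B.natAbs := Int.isCoprime_iff_gcd_eq_one.mp hcopaB
  have hcopstN : Nat.Coprime s.natAbs t.natAbs := Int.isCoprime_iff_gcd_eq_one.mp hcopst
  obtain ⟨d, e, f, g, hd0, he0, hf0, hg0, hA', hB', hS', hT', cde, cdf, cdg, cef, ceg, cfg⟩ :=
    natsplit a.natAbs B.natAbs s.natAbs t.natAbs hmulN hcopN hcopstN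
      (by omega) (by omega) (by omega)
  let D := (d:ℤ)
  let E := (e:ℤ)
  let F := (f:ℤ)
  let G := (g:ℤ)
  have hDpos : 0 < D := Int.natCast_pos.mpr hd0
  have hEpos : 0 < E := Int.natCast_pos.mpr he0
  have hFpos : 0 < F := Int.natCast_pos.mpr hf0
  have hGpos : 0 < G := Int.natCast_pos.mpr hg0
  have haDE : a = D*E := by rw [← haN, hA']; push_cast; ring
  have hBFG : B = F*G := by rw [← hBN, hB']; push_cast; ring
  have hsDF : s = D*F := by rw [← hsN, hS']; push_cast; ring
  have htEG : t = E*G := by rw [← htN, hT']; push_cast; ring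
  have iDG : IsCoprime D G := Int.isCoprime_iff_gcd_eq_one.mpr (by
    rw [Int.gcd_natCast_natCast]; exact cdg)
  have iEF : IsCoprime E F := Int.isCoprime_iff_gcd_eq_one.mpr (by
    rw [Int.gcd_natCast_natCast]; exact cef)
  have iFG : IsCoprime F G := Int.isCoprime_iff_gcd_eq_one.mpr (by
    rw [Int.gcd_natCast_natCast]; exact cfg)
  have hoDE : Odd D ∧ Odd E := by
    rw [← Int.odd_mul, ← haDE]; exact ⟨a0, ha0⟩
  obtain ⟨hoD, hoE⟩ := hoDE
  -- the key equation
  have hmain : D^2*(F^2 - E^2) = G^2*(4*F^2 - E^2) := by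
    rw [hsDF, htEG, haDE, hBFG] at hsum
    linear_combination hsum
  have hDG2 : IsCoprime (D^2) (G^2) := iDG.pow
  obtain ⟨k, hk⟩ : D^2 ∣ 4*F^2 - E^2 :=
    hDG2.dvd_of_dvd_mul_left ⟨F^2 - E^2, by linear_combination -hmain⟩
  have hfe : F^2 - E^2 = G^2*k := by
    have hD2 : (D:ℤ)^2 ≠ 0 := by positivity
    apply mul_left_cancel₀ hD2
    rw [hmain, hk]; ring
  have h3f : 3*F^2 = k*(D^2 - G^2) := by linear_combination hk - hfe
  have h3e : 3*E^2 = k*(D^2 - 4*G^2) := by linear_combination hk - 4*hfe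
  have hk3 : k ∣ 3 := by
    obtain ⟨u, v, huv⟩ := iEF.pow (n := 2) (m := 2)
    exact ⟨u*(D^2-4*G^2) + v*(D^2-G^2), by linear_combination u*h3e + v*h3f - 3*huv⟩
  have hkvals : k = 1 ∨ k = -1 ∨ k = 3 ∨ k = -3 := by
    have h1 : k.natAbs ∣ 3 := by
      have := Int.natAbs_dvd_natAbs.mpr hk3
      simpa using this
    have h2 := (Nat.dvd_prime Nat.prime_three).mp h1
    rcases Int.natAbs_eq k with h | h <;> rcases h2 with h' | h' <;> omega
  -- helper facts for bounds
  have hple : D*F + E*G = p := by rw [hpst, hsDF, htEG]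
  have hbound : D + G ≤ p := by
    rw [← hple]
    have h1 : D*1 ≤ D*F := by
      apply mul_le_mul_of_nonneg_left _ hDpos.le
      omega
    have h2 : 1*G ≤ E*G := by
      apply mul_le_mul_of_nonneg_right _ hGpos.le
      omega
    have h3 := add_le_add h1 h2
    rw [mul_one, one_mul] at h3
    exact h3
  have hbound2 : E + F ≤ p := by
    rw [← hple]
    have h1 : 1*F ≤ D*F := by
      apply mul_le_mul_of_nonneg_right _ hFpos.le
      omega
    have h2 : E*1 ≤ E*G := by
      apply mul_le_mul_of_nonneg_left _ hEpos.le
      omega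
    have h3 := add_le_add h2 h1
    rw [mul_one, one_mul] at h3
    exact h3.trans_eq (add_comm (E*G) (D*F))
  have c3 : (3:ℤ) ≠ 0 := by norm_num
  rcases hkvals with rfl | rfl | rfl | rfl
  · -- k = 1 : D² = 3E² + 4G², impossible
    exact absurd (kill1 D E G hoD hoE (by linear_combination -h3e)) (fun h => h)
  · -- k = -1 : E² = F²+G², D² = G²-3F²
    have hEsq : E^2 = F^2 + G^2 := by
      apply mul_left_cancel₀ c3
      linear_combination h3e - h3f
    have hDsq : D^2 = G^2 - 3*F^2 := by linear_combination h3f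
    rcases Int.even_or_odd F with hFe | hFo
    · -- F even : descent with X=G, Y=F, Z=E, V=D
      have hoG : Odd G := by
        rcases Int.even_or_odd G with hGe | hGo
        · exfalso
          obtain ⟨F0, hF0⟩ := hFe
          obtain ⟨G0, hG0⟩ := hGe
          obtain ⟨ke, hke⟩ := odd8 E hoE
          have key : 4*F0^2 + 4*G0^2 = 8*ke+1 := by
            linear_combination -(F+2*F0)*(by omega : F - 2*F0 = 0)
              - (G+2*G0)*(by omega : G - 2*G0 = 0) + hke - hEsq
          obtain ⟨w1, hw1⟩ : ∃ w, F0^2 = w := ⟨_, rfl⟩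
          obtain ⟨w2, hw2⟩ : ∃ w, G0^2 = w := ⟨_, rfl⟩
          rw [hw1, hw2] at key; omega
        · exact hGo
      obtain ⟨a', b', c', p', ha', hb', hc', hp', f1, f2, hps⟩ :=
        W2desc G F E D hGpos hFpos hEpos (ne_of_gt hDpos) iFG.symm hoG hFe
          (by linear_combination -hEsq) (by linear_combination -h3f)
      exact ⟨a', b', c', p', ha', hb', hc', hp', f1, f2,
        ltp p' p hp' hp2 (by omega)⟩
    · exact absurd (kill3 D E F G hoD hoE hFo hEsq hDsq) (fun h => h)
  · -- k = 3 : F² = D²-G², E² = D²-4G²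
    have hFsq : F^2 = D^2 - G^2 := by
      apply mul_left_cancel₀ c3
      linear_combination h3f
    have hEsq : E^2 = D^2 - 4*G^2 := by
      apply mul_left_cancel₀ c3
      linear_combination h3e
    rcases Int.even_or_odd G with hGe | hGo
    · -- G even : descent with X=F, Y=G, Z=D, V=E
      have hoF : Odd F := by
        rcases Int.even_or_odd F with hFe | hFo
        · exfalso
          obtain ⟨F0, hF0⟩ := hFe
          obtain ⟨G0, hG0⟩ := hGe
          obtain ⟨kd, hkd⟩ := odd8 D hoD
          have key : 4*F0^2 + 4*G0^2 = 8*kd+1 := by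
            linear_combination -(F+2*F0)*(by omega : F - 2*F0 = 0)
              - (G+2*G0)*(by omega : G - 2*G0 = 0) + hkd + hFsq
          obtain ⟨w1, hw1⟩ : ∃ w, F0^2 = w := ⟨_, rfl⟩
          obtain ⟨w2, hw2⟩ : ∃ w, G0^2 = w := ⟨_, rfl⟩
          rw [hw1, hw2] at key; omega
        · exact hFo
      obtain ⟨a', b', c', p', ha', hb', hc', hp', f1, f2, hps⟩ :=
        W2desc F G D E hFpos hGpos hDpos (ne_of_gt hEpos) iFG hoF hGe
          (by linear_combination hFsq) (by linear_combination hFsq - hEsq)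
      exact ⟨a', b', c', p', ha', hb', hc', hp', f1, f2,
        ltp p' p hp' hp2 (by omega)⟩
    · exact absurd (kill2 D E G hoD hoE hGo hEsq) (fun h => h)
  · -- k = -3 : E² = 3D² + 4F², impossible
    have hFsq : F^2 = G^2 - D^2 := by
      apply mul_left_cancel₀ c3
      linear_combination h3f
    have hEsq : E^2 = 4*G^2 - D^2 := by
      apply mul_left_cancel₀ c3
      linear_combination h3e
    exact absurd (kill1 E D F hoE hoD (by linear_combination hEsq - 4*hFsq)) (fun h => h)

lemma main_ind : ∀ n : ℕ, ∀ a b c p : ℤ, 0 < a → 0 < b → 0 < c → 0 < p →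
    a^2 + a*b + b^2 = p^2 → a^2 - a*b + b^2 = c^2 → p.toNat ≤ n → False := by
  intro n
  induction n with
  | zero => intro a b c p ha hb hc hp _ _ hle; omega
  | succ n ih =>
    intro a b c p ha hb hc hp e1 e2 hle
    by_cases hg : Int.gcd a b = 1
    · have hcop : IsCoprime a b := Int.isCoprime_iff_gcd_eq_one.mpr hg
      have hnotodd : Odd a → Odd b → False := by
        intro hoa hob
        have hop : Odd p := by
          obtain ⟨x, hx⟩ := hoa
          obtain ⟨y, hy⟩ := hob
          have h2 : Odd (p^2) := ⟨2*x^2+2*y^2+2*x*y+3*x+3*y+1, by rw [← e1, hx, hy]; ring⟩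
          simpa [Int.odd_pow] using h2
        have hoc : Odd c := by
          obtain ⟨x, hx⟩ := hoa
          obtain ⟨y, hy⟩ := hob
          have h2 : Odd (c^2) := ⟨2*x^2+2*y^2-2*x*y+x+y, by rw [← e2, hx, hy]; ring⟩
          simpa [Int.odd_pow] using h2
        obtain ⟨kp, hkp⟩ := odd8 p hop
        obtain ⟨kc, hkc⟩ := odd8 c hoc
        obtain ⟨w, hw⟩ := hoa.mul hob
        have key : 8*kp - 8*kc = 2*(2*w+1) := by
          linear_combination -hkp + hkc + e2 - e1 + 2*hw
        omega
      rcases Int.even_or_odd a with hea | hoa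
      · rcases Int.even_or_odd b with heb | hob
        · -- both even: contradicts coprimality
          obtain ⟨x, hx⟩ := hea
          obtain ⟨y, hy⟩ := heb
          have hu : IsUnit (2:ℤ) := hcop.isUnit_of_dvd' ⟨x, by omega⟩ ⟨y, by omega⟩
          rw [Int.isUnit_iff] at hu
          omega
        · -- a even, b odd: swap
          obtain ⟨a', b', c', p', ha', hb', hc', hp', f1, f2, hlt⟩ :=
            descent_core b a c p hb ha hc hp hcop.symm hob hea
              (by linear_combination e1) (by linear_combination e2)
          exact ih a' b' c' p' ha' hb' hc' hp' f1 f2 (by omega)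
      · rcases Int.even_or_odd b with heb | hob
        · obtain ⟨a', b', c', p', ha', hb', hc', hp', f1, f2, hlt⟩ :=
            descent_core a b c p ha hb hc hp hcop hoa heb e1 e2
          exact ih a' b' c' p' ha' hb' hc' hp' f1 f2 (by omega)
        · exact hnotodd hoa hob
    · -- common factor
      set g := Int.gcd a b with hgdef
      have hg0 : g ≠ 0 := by
        intro h
        have := Int.gcd_eq_zero_iff.mp h
        omega
      have hg2 : 2 ≤ (g:ℤ) := by
        have : 1 ≤ g := Nat.one_le_iff_ne_zero.mpr hg0
        have : g ≠ 1 := hg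
        omega
      obtain ⟨a₁, ha₁⟩ : (g:ℤ) ∣ a := Int.gcd_dvd_left _ _
      obtain ⟨b₁, hb₁⟩ : (g:ℤ) ∣ b := Int.gcd_dvd_right _ _
      have hgsq : ((g:ℤ))^2 ≠ 0 := by positivity
      obtain ⟨p₁, hp₁⟩ : (g:ℤ) ∣ p := by
        rw [← Int.pow_dvd_pow_iff (two_ne_zero)]
        exact ⟨a₁^2+a₁*b₁+b₁^2, by rw [← e1, ha₁, hb₁]; ring⟩
      obtain ⟨c₁, hc₁⟩ : (g:ℤ) ∣ c := by
        rw [← Int.pow_dvd_pow_iff (two_ne_zero)]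
        exact ⟨a₁^2-a₁*b₁+b₁^2, by rw [← e2, ha₁, hb₁]; ring⟩
      have ha₁p : 0 < a₁ := by nlinarith
      have hb₁p : 0 < b₁ := by nlinarith
      have hc₁p : 0 < c₁ := by nlinarith
      have hp₁p : 0 < p₁ := by nlinarith
      have e1' : a₁^2 + a₁*b₁ + b₁^2 = p₁^2 := by
        apply mul_left_cancel₀ hgsq
        rw [ha₁, hb₁, hp₁] at e1
        linear_combination e1
      have e2' : a₁^2 - a₁*b₁ + b₁^2 = c₁^2 := by
        apply mul_left_cancel₀ hgsq
        rw [ha₁, hb₁, hc₁] at e2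
        linear_combination e2
      have hlt : p₁ < p := by nlinarith
      exact ih a₁ b₁ c₁ p₁ ha₁p hb₁p hc₁p hp₁p e1' e2' (by omega)

theorem no_sol_system :
    ¬ ∃ a b c p : ℤ, 0 < a ∧ 0 < b ∧ 0 < c ∧ 0 < p ∧
      a ^ 2 + a * b + b ^ 2 = p ^ 2 ∧ a ^ 2 - a * b + b ^ 2 = c ^ 2 := by
  rintro ⟨a, b, c, p, ha, hb, hc, hp, e1, e2⟩
  exact main_ind p.toNat a b c p ha hb hc hp e1 e2 le_rfl
end

section
/- All solutions in positive integers a, p, k of the equation k² = a² + ap + p² are given by a = (m² − n²)l, p = (n² + 2mn)l, k = (m² + mn + n²)l, or the same with a and p swapped, for positive integers l, m, n with m > n. -/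
theorem eisenstein_param_general (a p k : ℕ) (ha : 0 < a) (hp : 0 < p) (hk : 0 < k)
    (heq : k ^ 2 = a ^ 2 + a * p + p ^ 2) :
    ∃ l m n : ℕ, 0 < l ∧ 0 < m ∧ 0 < n ∧ n < m ∧
      ((a = (m ^ 2 - n ^ 2) * l ∧ p = (n ^ 2 + 2 * m * n) * l) ∨
       (p = (m ^ 2 - n ^ 2) * l ∧ a = (n ^ 2 + 2 * m * n) * l)) ∧
      k = (m ^ 2 + m * n + n ^ 2) * l := by
  have hak : a < k := by nlinarith [mul_pos ha hp]
  obtain ⟨t, rfl⟩ : ∃ t, k = a + t := ⟨k - a, by omega⟩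
  have htpos : 0 < t := by omega
  have hcond : t ^ 2 + 2 * a * t = a * p + p ^ 2 := by nlinarith [heq]
  have hts : t < a + p := by nlinarith [hcond]
  set g := Nat.gcd (a + p) t with hgdef
  have hg : 0 < g := Nat.gcd_pos_of_pos_right _ htpos
  obtain ⟨m, hsm⟩ : g ∣ (a + p) := Nat.gcd_dvd_left _ _
  obtain ⟨n, htn⟩ : g ∣ t := Nat.gcd_dvd_right _ _
  have hm' : m = (a + p) / g := by rw [hsm]; exact (Nat.mul_div_cancel_left m hg).symm
  have hn' : n = t / g := by rw [htn]; exact (Nat.mul_div_cancel_left n hg).symm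
  have hcop : Nat.Coprime m n := by
    have h := Nat.coprime_div_gcd_div_gcd (m := a + p) (n := t) hg
    rwa [← hgdef, ← hm', ← hn'] at h
  have hm0 : 0 < m := by
    rcases Nat.eq_zero_or_pos m with h | h
    · rw [h, Nat.mul_zero] at hsm; omega
    · exact h
  have hn0 : 0 < n := by
    rcases Nat.eq_zero_or_pos n with h | h
    · rw [h, Nat.mul_zero] at htn; omega
    · exact h
  have hnm : n < m := by
    have : g * n < g * m := by rw [← htn, ← hsm]; exact hts
    exact Nat.lt_of_mul_lt_mul_left this
  -- integer versions of the basic facts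
  have zc : (t : ℤ) ^ 2 + 2 * a * t = a * p + p ^ 2 := by exact_mod_cast hcond
  have zs : ((a : ℤ) + p) = g * m := by exact_mod_cast hsm
  have zt : (t : ℤ) = g * n := by exact_mod_cast htn
  -- key identities
  have E2 : (m ^ 2 + m * n + n ^ 2) * a + (a + t) * n ^ 2 = (a + t) * m ^ 2 := by
    have z : (((m : ℤ) ^ 2 + m * n + n ^ 2) * a + ((a : ℤ) + t) * n ^ 2) * (g * g)
        = (((a : ℤ) + t) * m ^ 2) * (g * g) := by
      linear_combination ((g : ℤ) * n) * zc + ((t : ℤ) * g * m + (p : ℤ) * g * n) * zs +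
        (-(t : ℤ) * g * n - (p : ℤ) * g * m - 2 * (a : ℤ) * g * n - (a : ℤ) * g * m) * zt
    have zN : ((m ^ 2 + m * n + n ^ 2) * a + (a + t) * n ^ 2) * (g * g)
        = ((a + t) * m ^ 2) * (g * g) := by exact_mod_cast z
    exact Nat.eq_of_mul_eq_mul_right (Nat.mul_pos hg hg) zN
  have E3 : (m ^ 2 + m * n + n ^ 2) * p = (a + t) * (n ^ 2 + 2 * m * n) := by
    have z : (((m : ℤ) ^ 2 + m * n + n ^ 2) * p) * (g * g)
        = (((a : ℤ) + t) * (n ^ 2 + 2 * m * n)) * (g * g) := by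
      linear_combination (-(g : ℤ) * n - (g : ℤ) * m) * zc +
        ((t : ℤ) * g * n - (p : ℤ) * g * n - (p : ℤ) * g * m) * zs +
        ((t : ℤ) * g * n + (t : ℤ) * g * m - (p : ℤ) * g * n + (a : ℤ) * g * n +
          2 * (a : ℤ) * g * m) * zt
    have zN : ((m ^ 2 + m * n + n ^ 2) * p) * (g * g)
        = ((a + t) * (n ^ 2 + 2 * m * n)) * (g * g) := by exact_mod_cast z
    exact Nat.eq_of_mul_eq_mul_right (Nat.mul_pos hg hg) zN
  -- basic coprimality facts
  have copDn : Nat.Coprime (m ^ 2 + m * n + n ^ 2) n := by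
    have h2 : Nat.Coprime (m ^ 2 + n * (m + n)) n :=
      (Nat.coprime_add_mul_left_left (m ^ 2) n (m + n)).mpr (Nat.Coprime.pow_left 2 hcop)
    have e : m ^ 2 + m * n + n ^ 2 = m ^ 2 + n * (m + n) := by ring
    rwa [e]
  have copDm : Nat.Coprime (m ^ 2 + m * n + n ^ 2) m := by
    have h2 : Nat.Coprime (n ^ 2 + m * (n + m)) m :=
      (Nat.coprime_add_mul_left_left (n ^ 2) m (n + m)).mpr (Nat.Coprime.pow_left 2 hcop.symm)
    have e : m ^ 2 + m * n + n ^ 2 = n ^ 2 + m * (n + m) := by ring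
    rwa [e]
  have hsq : m ^ 2 + m * n + n ^ 2 = (m - n) ^ 2 + 3 * (m * n) := by
    obtain ⟨e, he⟩ : ∃ e, m = n + e := ⟨m - n, by omega⟩
    rw [he, Nat.add_sub_cancel_left]; ring
  by_cases h3 : 3 ∣ (m ^ 2 + m * n + n ^ 2)
  · -- case B : 3 divides D, use transformed parameters for the swapped disjunct
    have h3mn : 3 ∣ (m - n) := by
      have hd : (3 : ℕ) ∣ (m - n) ^ 2 := by
        have h1 : (3 : ℕ) ∣ 3 * (m * n) := Dvd.intro (m * n) rfl
        have h2 := Nat.dvd_sub h3 h1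
        rwa [hsq, Nat.add_sub_cancel] at h2
      exact Nat.Prime.dvd_of_dvd_pow Nat.prime_three hd
    obtain ⟨c, hc⟩ := h3mn
    have hm3 : m = n + 3 * c := by omega
    have hc0 : 0 < c := by omega
    subst hm3
    have cop3cn : Nat.Coprime (3 * c) n := by
      have h := hcop
      rwa [show n + 3 * c = 3 * c + n by ring, Nat.coprime_add_self_left] at h
    obtain ⟨cop3n, copcn⟩ := Nat.coprime_mul_iff_left.mp cop3cn
    -- D = 3 * D'
    have hDD : (n + 3 * c) ^ 2 + (n + 3 * c) * n + n ^ 2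
        = 3 * (n ^ 2 + 3 * c * n + 3 * c ^ 2) := by ring
    -- reduced identities
    have zE2 := congrArg (Nat.cast : ℕ → ℤ) E2
    have zE3 := congrArg (Nat.cast : ℕ → ℤ) E3
    push_cast at zE2 zE3
    have hA : (a + t) * (c * (2 * n + 3 * c)) = (n ^ 2 + 3 * c * n + 3 * c ^ 2) * a := by
      have z : (3 : ℤ) * ((a + t) * (c * (2 * n + 3 * c)))
          = 3 * (((n : ℤ) ^ 2 + 3 * c * n + 3 * c ^ 2) * a) := by linear_combination -zE2
      have zN : 3 * ((a + t) * (c * (2 * n + 3 * c)))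
          = 3 * ((n ^ 2 + 3 * c * n + 3 * c ^ 2) * a) := by exact_mod_cast z
      exact Nat.eq_of_mul_eq_mul_left (by norm_num) zN
    have hB : (n ^ 2 + 3 * c * n + 3 * c ^ 2) * p = (a + t) * (n * (n + 2 * c)) := by
      have z : (3 : ℤ) * (((n : ℤ) ^ 2 + 3 * c * n + 3 * c ^ 2) * p)
          = 3 * (((a : ℤ) + t) * (n * (n + 2 * c))) := by linear_combination zE3
      have zN : 3 * ((n ^ 2 + 3 * c * n + 3 * c ^ 2) * p)
          = 3 * ((a + t) * (n * (n + 2 * c))) := by exact_mod_cast z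
      exact Nat.eq_of_mul_eq_mul_left (by norm_num) zN
    -- coprimality for D'
    have copD'c : Nat.Coprime (n ^ 2 + 3 * c * n + 3 * c ^ 2) c := by
      have h2 : Nat.Coprime (n ^ 2 + c * (3 * n + 3 * c)) c :=
        (Nat.coprime_add_mul_left_left (n ^ 2) c (3 * n + 3 * c)).mpr
          (Nat.Coprime.pow_left 2 copcn.symm)
      have e : n ^ 2 + 3 * c * n + 3 * c ^ 2 = n ^ 2 + c * (3 * n + 3 * c) := by ring
      rwa [e]
    have h3D' : ¬ 3 ∣ (n ^ 2 + 3 * c * n + 3 * c ^ 2) := by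
      intro hdvd
      have h1 : (3 : ℕ) ∣ 3 * c * n + 3 * c ^ 2 := ⟨c * n + c ^ 2, by ring⟩
      have h2 := Nat.dvd_sub hdvd h1
      rw [show n ^ 2 + 3 * c * n + 3 * c ^ 2 = n ^ 2 + (3 * c * n + 3 * c ^ 2) by ring,
        Nat.add_sub_cancel] at h2
      have h3n : (3 : ℕ) ∣ n := Nat.Prime.dvd_of_dvd_pow Nat.prime_three h2
      exact (Nat.Prime.coprime_iff_not_dvd Nat.prime_three).mp cop3n h3n
    have copD'x : Nat.Coprime (n ^ 2 + 3 * c * n + 3 * c ^ 2) (2 * n + 3 * c) := by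
      set d := Nat.gcd (n ^ 2 + 3 * c * n + 3 * c ^ 2) (2 * n + 3 * c) with hd
      have hdd : d ∣ (n ^ 2 + 3 * c * n + 3 * c ^ 2) := Nat.gcd_dvd_left _ _
      have hdx : d ∣ (2 * n + 3 * c) := Nat.gcd_dvd_right _ _
      have hd4 : d ∣ 4 * (n ^ 2 + 3 * c * n + 3 * c ^ 2) := Dvd.dvd.mul_left hdd 4
      have hdsq : d ∣ (2 * n + 3 * c) ^ 2 := by rw [pow_two]; exact hdx.mul_left _
      have hd3c : d ∣ 3 * c ^ 2 := by
        have h2 := Nat.dvd_sub hd4 hdsq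
        rwa [show 4 * (n ^ 2 + 3 * c * n + 3 * c ^ 2) = (2 * n + 3 * c) ^ 2 + 3 * c ^ 2 by ring,
          Nat.add_sub_cancel_left] at h2
      have cdc : Nat.Coprime d c := Nat.Coprime.coprime_dvd_left hdd copD'c
      have hd3 : d ∣ 3 := by
        have h1 : d ∣ (3 * c) * c := by rwa [show (3 * c) * c = 3 * c ^ 2 by ring]
        exact cdc.dvd_of_dvd_mul_right (cdc.dvd_of_dvd_mul_right h1)
      rcases (Nat.prime_three.eq_one_or_self_of_dvd d hd3) with h | h
      · exact h
      · exact absurd (h ▸ hdd) h3D'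
    have hD'k : (n ^ 2 + 3 * c * n + 3 * c ^ 2) ∣ (a + t) := by
      have hdvd : (n ^ 2 + 3 * c * n + 3 * c ^ 2) ∣ (a + t) * (c * (2 * n + 3 * c)) := by
        rw [hA]; exact Dvd.intro a rfl
      exact (copD'c.mul_right copD'x).dvd_of_dvd_mul_right hdvd
    obtain ⟨l, hl⟩ := hD'k
    have hD'pos : 0 < n ^ 2 + 3 * c * n + 3 * c ^ 2 := by positivity
    have hl0 : 0 < l := by
      rcases Nat.eq_zero_or_pos l with h | h
      · rw [h, Nat.mul_zero] at hl; omega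
      · exact h
    refine ⟨l, n + c, c, hl0, by omega, hc0, by omega, Or.inr ⟨?_, ?_⟩, ?_⟩
    · have e : (n + c) ^ 2 - c ^ 2 = n * (n + 2 * c) := Nat.sub_eq_of_eq_add (by ring)
      rw [e]
      have h1 : (n ^ 2 + 3 * c * n + 3 * c ^ 2) * (n * (n + 2 * c) * l)
          = (n ^ 2 + 3 * c * n + 3 * c ^ 2) * p := by
        calc (n ^ 2 + 3 * c * n + 3 * c ^ 2) * (n * (n + 2 * c) * l)
            = ((n ^ 2 + 3 * c * n + 3 * c ^ 2) * l) * (n * (n + 2 * c)) := by ring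
          _ = (a + t) * (n * (n + 2 * c)) := by rw [← hl]
          _ = (n ^ 2 + 3 * c * n + 3 * c ^ 2) * p := hB.symm
      exact (Nat.eq_of_mul_eq_mul_left hD'pos h1).symm
    · have e : c ^ 2 + 2 * (n + c) * c = c * (2 * n + 3 * c) := by ring
      rw [e]
      have h1 : (n ^ 2 + 3 * c * n + 3 * c ^ 2) * (c * (2 * n + 3 * c) * l)
          = (n ^ 2 + 3 * c * n + 3 * c ^ 2) * a := by
        calc (n ^ 2 + 3 * c * n + 3 * c ^ 2) * (c * (2 * n + 3 * c) * l)
            = ((n ^ 2 + 3 * c * n + 3 * c ^ 2) * l) * (c * (2 * n + 3 * c)) := by ring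
          _ = (a + t) * (c * (2 * n + 3 * c)) := by rw [← hl]
          _ = (n ^ 2 + 3 * c * n + 3 * c ^ 2) * a := hA
      exact (Nat.eq_of_mul_eq_mul_left hD'pos h1).symm
    · rw [show (n + c) ^ 2 + (n + c) * c + c ^ 2 = n ^ 2 + 3 * c * n + 3 * c ^ 2 by ring]
      exact hl
  · -- case A : 3 does not divide D, direct parameters
    have hDmn : Nat.Coprime (m ^ 2 + m * n + n ^ 2) (m - n) := by
      set d := Nat.gcd (m ^ 2 + m * n + n ^ 2) (m - n) with hd
      have hdd : d ∣ (m ^ 2 + m * n + n ^ 2) := Nat.gcd_dvd_left _ _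
      have hdm : d ∣ (m - n) := Nat.gcd_dvd_right _ _
      have hdsq : d ∣ (m - n) ^ 2 := by rw [pow_two]; exact hdm.mul_left _
      have hd3mn : d ∣ 3 * (m * n) := by
        have h2 := Nat.dvd_sub hdd hdsq
        rwa [hsq, Nat.add_sub_cancel_left] at h2
      have cgn : Nat.Coprime d n := Nat.Coprime.coprime_dvd_left hdd copDn
      have cgm : Nat.Coprime d m := Nat.Coprime.coprime_dvd_left hdd copDm
      have hd3 : d ∣ 3 := by
        have h1 : d ∣ (3 * m) * n := by rwa [show (3 * m) * n = 3 * (m * n) by ring]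
        exact cgm.dvd_of_dvd_mul_right (cgn.dvd_of_dvd_mul_right h1)
      rcases (Nat.prime_three.eq_one_or_self_of_dvd d hd3) with h | h
      · exact h
      · exact absurd (h ▸ hdd) h3
    have hDmn2 : Nat.Coprime (m ^ 2 + m * n + n ^ 2) (m + n) := by
      set d := Nat.gcd (m ^ 2 + m * n + n ^ 2) (m + n) with hd
      have hdd : d ∣ (m ^ 2 + m * n + n ^ 2) := Nat.gcd_dvd_left _ _
      have hdm : d ∣ (m + n) := Nat.gcd_dvd_right _ _
      have h2 : d ∣ n ^ 2 := by
        have h1 : d ∣ m * (m + n) := hdm.mul_left m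
        have h2 := Nat.dvd_sub hdd h1
        rwa [show m ^ 2 + m * n + n ^ 2 = n ^ 2 + m * (m + n) by ring,
          Nat.add_sub_cancel] at h2
      have cgn : Nat.Coprime d n := Nat.Coprime.coprime_dvd_left hdd copDn
      have hdn : d ∣ n := by
        have h1 : d ∣ n * n := by rwa [← pow_two]
        exact cgn.dvd_of_dvd_mul_right h1
      exact Nat.dvd_one.mp (cgn ▸ Nat.dvd_gcd dvd_rfl hdn)
    have hsubeq : (a + t) * (m ^ 2 - n ^ 2) = (m ^ 2 + m * n + n ^ 2) * a := by
      rw [Nat.mul_sub]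
      exact Nat.sub_eq_of_eq_add E2.symm
    have hDk : (m ^ 2 + m * n + n ^ 2) ∣ (a + t) := by
      have hcopprod : Nat.Coprime (m ^ 2 + m * n + n ^ 2) (m ^ 2 - n ^ 2) := by
        rw [Nat.sq_sub_sq]
        exact hDmn2.mul_right hDmn
      have hdvd : (m ^ 2 + m * n + n ^ 2) ∣ (a + t) * (m ^ 2 - n ^ 2) := by
        rw [hsubeq]; exact Dvd.intro a rfl
      exact hcopprod.dvd_of_dvd_mul_right hdvd
    obtain ⟨l, hl⟩ := hDk
    have hDpos : 0 < m ^ 2 + m * n + n ^ 2 := by positivity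
    have hl0 : 0 < l := by
      rcases Nat.eq_zero_or_pos l with h | h
      · rw [h, Nat.mul_zero] at hl; omega
      · exact h
    refine ⟨l, m, n, hl0, hm0, hn0, hnm, Or.inl ⟨?_, ?_⟩, ?_⟩
    · have h1 : (m ^ 2 + m * n + n ^ 2) * ((m ^ 2 - n ^ 2) * l)
          = (m ^ 2 + m * n + n ^ 2) * a := by
        calc (m ^ 2 + m * n + n ^ 2) * ((m ^ 2 - n ^ 2) * l)
            = ((m ^ 2 + m * n + n ^ 2) * l) * (m ^ 2 - n ^ 2) := by ring
          _ = (a + t) * (m ^ 2 - n ^ 2) := by rw [← hl]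
          _ = (m ^ 2 + m * n + n ^ 2) * a := hsubeq
      exact (Nat.eq_of_mul_eq_mul_left hDpos h1).symm
    · have h1 : (m ^ 2 + m * n + n ^ 2) * ((n ^ 2 + 2 * m * n) * l)
          = (m ^ 2 + m * n + n ^ 2) * p := by
        calc (m ^ 2 + m * n + n ^ 2) * ((n ^ 2 + 2 * m * n) * l)
            = ((m ^ 2 + m * n + n ^ 2) * l) * (n ^ 2 + 2 * m * n) := by ring
          _ = (a + t) * (n ^ 2 + 2 * m * n) := by rw [← hl]
          _ = (m ^ 2 + m * n + n ^ 2) * p := E3.symm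
      exact (Nat.eq_of_mul_eq_mul_left hDpos h1).symm
    · exact hl
end

section
/- If ABC is an equilateral triangle with positive integer side length a and M is a point in its plane with |MA|, |MB|, |MC| all positive integers, and ∠AMC = π/2, then no such M exists; i.e., the system q² = p² + a² and k⁴ − 2(p²+q²)k² + (p⁴ − p²q² + q⁴) = 0 has no solution in positive integers p, q, k, a. -/
lemma no_int_sqrt3 (t m : ℤ) (hm : 0 < m) (h : t ^ 2 = 3 * m ^ 2) : False := by
  have hirr : Irrational (Real.sqrt 3) := by
    simpa using (Nat.prime_three).irrational_sqrt
  have hm' : (0 : ℝ) < (m : ℝ) := by exact_mod_cast hm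
  have hsqrt : Real.sqrt 3 = (|t| : ℝ) / (m : ℝ) := by
    rw [show (3 : ℝ) = ((|t| : ℝ) / (m : ℝ)) ^ 2 by
      field_simp
      simpa [sq_abs] using (by exact_mod_cast h.symm : (3:ℝ) * (m:ℝ)^2 = (t:ℝ)^2)]
    exact Real.sqrt_sq (by positivity)
  apply hirr
  refine ⟨(|t| : ℚ) / (m : ℚ), ?_⟩
  rw [hsqrt]
  push_cast
  ring

theorem no_sol_right_angle_system :
    ¬ ∃ p q k a : ℤ, 0 < p ∧ 0 < q ∧ 0 < k ∧ 0 < a ∧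
      q ^ 2 = p ^ 2 + a ^ 2 ∧
      k ^ 4 - 2 * (p ^ 2 + q ^ 2) * k ^ 2 +
        (p ^ 4 - p ^ 2 * q ^ 2 + q ^ 4) = 0 := by
  rintro ⟨p, q, k, a, hp, hq, hk, ha, h1, h2⟩
  have ht : (k ^ 2 - (p ^ 2 + q ^ 2)) ^ 2 = 3 * (p * q) ^ 2 := by linarith [h2, sq_nonneg (k^2 - (p^2+q^2))]
  exact no_int_sqrt3 _ (p * q) (mul_pos hp hq) ht
end
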